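/- arXiv:math/0212183 — 8 statements merged into one kernel-verified Lean document; each statement's English description precedes it below -/
import Mathlib

section
/- Let G and A be groups, with G acting on A by group automorphisms (written g·a), and let A⋊G be the corresponding semidirect product. Let X be a set with an action of A⋊G (for a∈A, g∈G, x∈X write a·x and g·x for the actions via the canonical inclusions A → A⋊G and G → A⋊G). Let π: G → A be a bijection satisfying π(gh) = π(g)·(g·π(h)) for all g,h ∈ G, and let Ψ: X → A be a map satisfying Ψ((a,g)·x) = a·(g·Ψ(x))·a⁻¹ for all a ∈ A, g ∈ G, x ∈ X, whose image generates A. For x,y ∈ X define x∗̌y := π⁻¹(Ψ(y)⁻¹)·x and x∘̌y := (π⁻¹(Ψ(x∗̌y)⁻¹))⁻¹·(Ψ(x∗̌y)·y). Then the map R: X×X → X×X, R(x,y) = (x∗̌y, x∘̌y), satisfies R¹²∘R¹³∘R²³ = R²³∘R¹³∘R¹² as maps X×X×X → X×X×X, where Rⁱʲ denotes R applied to the i-th and j-th coordinates. -/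
/-!
Put `t y := π⁻¹ (Ψ y)⁻¹`. Then `x ∗̌ y = t y • x` and `x ∘̌ y = θ (t (x ∗̌ y))⁻¹ • y`, where
`θ g = (π g, g)` is a homomorphism `G → A ⋊ G` precisely because `π` is a cocycle, and `π ∘ t`
is equivariant like `Ψ`. Equivariance gives `π (g * t (θ g⁻¹ • y)) = π (t y) * π g`, hence
`t (x ∗̌ y) * t (x ∘̌ y) = t y * t x`, and the three coordinates of the braid equation reduce to
identities in `G`. For the last one both sides have the form `θ g⁻¹ • z`, and the same formula
shows that `g` is recovered from `g * t (θ g⁻¹ • z)`.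
-/

section
variable {A G : Type*} [Group A] [Group G]

open SemidirectProduct

def IsOneCocycle (φ : G →* MulAut A) (π : G → A) : Prop :=
  ∀ g h, π (g * h) = π g * φ g (π h)

def ConjEquivariant (φ : G →* MulAut A) {X : Type*} [MulAction (A ⋊[φ] G) X] (f : X → A) :
    Prop :=
  ∀ (a : A) (g : G) (x : X), f ((⟨a, g⟩ : A ⋊[φ] G) • x) = a * φ g (f x) * a⁻¹

namespace IsOneCocycle

variable {φ : G →* MulAut A} {π : G → A}

theorem map_one (hπ : IsOneCocycle φ π) : π 1 = 1 := by
  simpa using hπ 1 1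

theorem aut_apply (hπ : IsOneCocycle φ π) (g h : G) : φ g (π h) = (π g)⁻¹ * π (g * h) := by
  rw [hπ]; group

theorem aut_apply_inv (hπ : IsOneCocycle φ π) (g : G) : φ g (π g⁻¹) = (π g)⁻¹ := by
  rw [hπ.aut_apply, mul_inv_cancel, hπ.map_one, mul_one]

def graph (hπ : IsOneCocycle φ π) : G →* A ⋊[φ] G :=
  MonoidHom.mk' (fun g => ⟨π g, g⟩) fun g h => by ext <;> simp [hπ g h]

@[simp]
theorem graph_apply (hπ : IsOneCocycle φ π) (g : G) : hπ.graph g = ⟨π g, g⟩ := rfl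

theorem graph_inv (hπ : IsOneCocycle φ π) (g : G) :
    (hπ.graph g)⁻¹ = inr g⁻¹ * inl (π g)⁻¹ := by
  rw [graph_apply, mk_eq_inl_mul_inr, mul_inv_rev, map_inv, map_inv]

theorem inr_mul_graph (hπ : IsOneCocycle φ π) {g m k τ : G} (hk : π k = φ g (π m))
    (hτ : k * τ = g * m) : inr g * hπ.graph m = hπ.graph k * inr τ := by
  ext <;> simp [hk, hτ]

end IsOneCocycle

variable {φ : G →* MulAut A} {X : Type*} [MulAction (A ⋊[φ] G) X]

namespace ConjEquivariant

variable {f : X → A}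

theorem inv (hf : ConjEquivariant φ f) : ConjEquivariant φ fun x => (f x)⁻¹ := by
  intro a g x
  change (f _)⁻¹ = _
  rw [hf, map_inv]
  group

theorem apply_inr_smul (hf : ConjEquivariant φ f) (g : G) (x : X) :
    f ((inr g : A ⋊[φ] G) • x) = φ g (f x) := by
  simpa using hf 1 g x

end ConjEquivariant

namespace Soloviev

variable (φ) in
def star (t : X → G) (x y : X) : X := (inr (t y) : A ⋊[φ] G) • x

def circ {π : G → A} (hπ : IsOneCocycle φ π) (t : X → G) (x y : X) : X :=
  (hπ.graph (t (star φ t x y)))⁻¹ • y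

variable {π : G → A} {t : X → G}

theorem apply_graph_smul (hπ : IsOneCocycle φ π) (ht : ConjEquivariant φ (π ∘ t))
    (g : G) (y : X) : π (t (hπ.graph g • y)) = π (g * t y) * (π g)⁻¹ := by
  rw [IsOneCocycle.graph_apply, hπ]
  exact ht (π g) g y

theorem mul_apply_graph_inv_smul (hπ : IsOneCocycle φ π) (ht : ConjEquivariant φ (π ∘ t))
    (g : G) (y : X) : π (g * t ((hπ.graph g)⁻¹ • y)) = π (t y) * π g := by
  rw [← map_inv, hπ, apply_graph_smul hπ ht, map_mul, map_inv, hπ.aut_apply, hπ.aut_apply_inv,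
    mul_inv_cancel_left]
  group

theorem mul_apply_graph_inv_smul_injective (hπ : IsOneCocycle φ π)
    (ht : ConjEquivariant φ (π ∘ t)) (hinj : Function.Injective π) (y : X) :
    Function.Injective fun g => g * t ((hπ.graph g)⁻¹ • y) := by
  intro g g' h
  have := congrArg π h
  simp only [mul_apply_graph_inv_smul hπ ht] at this
  exact hinj (mul_left_cancel this)

theorem star_mul_circ (hπ : IsOneCocycle φ π) (ht : ConjEquivariant φ (π ∘ t))
    (hinj : Function.Injective π) (x y : X) :
    t (star φ t x y) * t (circ hπ t x y) = t y * t x := by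
  apply hinj
  have hstar : π (t (star φ t x y)) = φ (t y) (π (t x)) := ht.apply_inr_smul (t y) x
  rw [circ, mul_apply_graph_inv_smul hπ ht, hstar, hπ]

theorem star_star_circ (hπ : IsOneCocycle φ π) (ht : ConjEquivariant φ (π ∘ t))
    (hinj : Function.Injective π) (x y z : X) :
    star φ t (star φ t x (circ hπ t y z)) (star φ t y z) = star φ t (star φ t x y) z := by
  change (inr (t (star φ t y z)) : A ⋊[φ] G) • inr (t (circ hπ t y z)) • x =
    (inr (t z) : A ⋊[φ] G) • inr (t y) • x
  rw [smul_smul, smul_smul, ← map_mul, ← map_mul, star_mul_circ hπ ht hinj]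

theorem circ_star_circ (hπ : IsOneCocycle φ π) (ht : ConjEquivariant φ (π ∘ t))
    (hinj : Function.Injective π) (x y z : X) :
    circ hπ t (star φ t x (circ hπ t y z)) (star φ t y z) =
      star φ t (circ hπ t x y) (circ hπ t (star φ t x y) z) := by
  have hk : π (t (star φ t (star φ t x y) z)) = φ (t z) (π (t (star φ t x y))) :=
    ht.apply_inr_smul (t z) _
  have hcomm := hπ.inr_mul_graph hk (star_mul_circ hπ ht hinj (star φ t x y) z)
  have hconj : (hπ.graph (t (star φ t (star φ t x y) z)))⁻¹ * inr (t z) =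
      inr (t (circ hπ t (star φ t x y) z)) * (hπ.graph (t (star φ t x y)))⁻¹ := by
    rw [inv_mul_eq_iff_eq_mul, ← mul_assoc, ← hcomm, mul_inv_cancel_right]
  rw [circ, star_star_circ hπ ht hinj]
  change _ • (inr (t z) : A ⋊[φ] G) • y = (inr _ : A ⋊[φ] G) • (hπ.graph _)⁻¹ • y
  rw [smul_smul, smul_smul, hconj]

theorem circ_circ (hπ : IsOneCocycle φ π) (ht : ConjEquivariant φ (π ∘ t))
    (hinj : Function.Injective π) (x y z : X) :
    circ hπ t x (circ hπ t y z) = circ hπ t (circ hπ t x y) (circ hπ t (star φ t x y) z) := by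
  set s := t (star φ t y z)
  set n := t (star φ t x (circ hπ t y z))
  set k := t (star φ t (star φ t x y) z)
  set r := t (star φ t (circ hπ t x y) (circ hπ t (star φ t x y) z))
  have hL : circ hπ t x (circ hπ t y z) = (hπ.graph (s * n))⁻¹ • z := by
    rw [map_mul, mul_inv_rev, mul_smul]; rfl
  have hR : circ hπ t (circ hπ t x y) (circ hπ t (star φ t x y) z) =
      (hπ.graph (k * r))⁻¹ • z := by
    rw [map_mul, mul_inv_rev, mul_smul]; rfl
  have key : s * n * t (circ hπ t x (circ hπ t y z)) =
      k * r * t (circ hπ t (circ hπ t x y) (circ hπ t (star φ t x y) z)) :=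
    calc s * n * t (circ hπ t x (circ hπ t y z))
        _ = s * t (circ hπ t y z) * t x := by rw [mul_assoc, star_mul_circ hπ ht hinj, mul_assoc]
        _ = t z * t (star φ t x y) * t (circ hπ t x y) := by
          rw [star_mul_circ hπ ht hinj, mul_assoc, mul_assoc, star_mul_circ hπ ht hinj]
        _ = k * t (circ hπ t (star φ t x y) z) * t (circ hπ t x y) := by
          rw [star_mul_circ hπ ht hinj]
        _ = k * r * t (circ hπ t (circ hπ t x y) (circ hπ t (star φ t x y) z)) := by
          rw [mul_assoc k r, star_mul_circ hπ ht hinj (circ hπ t x y), mul_assoc]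
  rw [hL, hR] at key ⊢
  rw [mul_apply_graph_inv_smul_injective hπ ht hinj z key]

end Soloviev
end

theorem soloviev_bcst_yields_qybe_general
    {A G X : Type*} [Group A] [Group G] (φ : G →* MulAut A)
    [MulAction (A ⋊[φ] G) X]
    (π : G → A) (πinv : A → G)
    (hπl : Function.LeftInverse πinv π) (hπr : Function.RightInverse πinv π)
    (hcoc : ∀ g h : G, π (g * h) = π g * φ g (π h))
    (Ψ : X → A)
    (hΨ : ∀ (a : A) (g : G) (x : X),
      Ψ ((⟨a, g⟩ : A ⋊[φ] G) • x) = a * φ g (Ψ x) * a⁻¹)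
    (star circ : X → X → X)
    (hstar : ∀ x y : X,
      star x y = (SemidirectProduct.inr (πinv ((Ψ y)⁻¹)) : A ⋊[φ] G) • x)
    (hcirc : ∀ x y : X,
      circ x y = (SemidirectProduct.inr ((πinv ((Ψ (star x y))⁻¹))⁻¹) : A ⋊[φ] G) •
        ((SemidirectProduct.inl (Ψ (star x y)) : A ⋊[φ] G) • y))
    (R : X × X → X × X) (hR : ∀ x y : X, R (x, y) = (star x y, circ x y))
    (R12 R13 R23 : X × X × X → X × X × X)
    (hR12 : ∀ p : X × X × X,
      R12 p = ((R (p.1, p.2.1)).1, (R (p.1, p.2.1)).2, p.2.2))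
    (hR13 : ∀ p : X × X × X,
      R13 p = ((R (p.1, p.2.2)).1, p.2.1, (R (p.1, p.2.2)).2))
    (hR23 : ∀ p : X × X × X,
      R23 p = (p.1, R (p.2.1, p.2.2))) :
    R12 ∘ R13 ∘ R23 = R23 ∘ R13 ∘ R12 := by
  have hπ : IsOneCocycle φ π := hcoc
  let t : X → G := fun y => πinv (Ψ y)⁻¹
  have hπt : ∀ y, π (t y) = (Ψ y)⁻¹ := fun y => hπr _
  have ht : ConjEquivariant φ (π ∘ t) := by
    simpa only [Function.comp_def, hπt] using ConjEquivariant.inv hΨ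
  have hstar' : star = Soloviev.star φ t := funext₂ hstar
  have hcirc' : circ = Soloviev.circ hπ t := by
    funext x y
    rw [hcirc, ← mul_smul, Soloviev.circ, hπ.graph_inv, hπt, inv_inv, hstar']
  subst hstar' hcirc'
  funext ⟨x, y, z⟩
  simp only [Function.comp_apply, hR12, hR13, hR23, hR, Prod.mk.injEq]
  exact ⟨Soloviev.star_star_circ hπ ht hπl.injective x y z,
    Soloviev.circ_star_circ hπ ht hπl.injective x y z, Soloviev.circ_circ hπ ht hπl.injective x y z⟩

/-- **Soloviev's lemma** (Lemma 2.2 in Etingof–Graña): a bijective cocycle 7-tuple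
yields a set-theoretical solution of the braid/quantum Yang–Baxter equation
`R¹² ∘ R¹³ ∘ R²³ = R²³ ∘ R¹³ ∘ R¹²`. -/
theorem soloviev_bcst_yields_qybe
    {A G X : Type*} [Group A] [Group G] (φ : G →* MulAut A)
    [MulAction (A ⋊[φ] G) X]
    (π : G → A) (πinv : A → G)
    (hπl : Function.LeftInverse πinv π) (hπr : Function.RightInverse πinv π)
    (hcoc : ∀ g h : G, π (g * h) = π g * φ g (π h))
    (Ψ : X → A)
    (hΨ : ∀ (a : A) (g : G) (x : X),
      Ψ ((⟨a, g⟩ : A ⋊[φ] G) • x) = a * φ g (Ψ x) * a⁻¹)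
    (hgen : Subgroup.closure (Set.range Ψ) = ⊤)
    (star circ : X → X → X)
    (hstar : ∀ x y : X,
      star x y = (SemidirectProduct.inr (πinv ((Ψ y)⁻¹)) : A ⋊[φ] G) • x)
    (hcirc : ∀ x y : X,
      circ x y = (SemidirectProduct.inr ((πinv ((Ψ (star x y))⁻¹))⁻¹) : A ⋊[φ] G) •
        ((SemidirectProduct.inl (Ψ (star x y)) : A ⋊[φ] G) • y))
    (R : X × X → X × X) (hR : ∀ x y : X, R (x, y) = (star x y, circ x y))
    (R12 R13 R23 : X × X × X → X × X × X)
    (hR12 : ∀ p : X × X × X,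
      R12 p = ((R (p.1, p.2.1)).1, (R (p.1, p.2.1)).2, p.2.2))
    (hR13 : ∀ p : X × X × X,
      R13 p = ((R (p.1, p.2.2)).1, p.2.1, (R (p.1, p.2.2)).2))
    (hR23 : ∀ p : X × X × X,
      R23 p = (p.1, R (p.2.1, p.2.2))) :
    R12 ∘ R13 ∘ R23 = R23 ∘ R13 ∘ R12 :=
  soloviev_bcst_yields_qybe_general φ π πinv hπl hπr hcoc Ψ hΨ star circ hstar hcirc R hR R12 R13
    R23 hR12 hR13 hR23
end

section
/- Given a geometric classical r-matrix datum on A, the ℂ-span of {a¹_1,…,a¹_m} is a Lie subalgebra of Der(A): for all i,k one has [a¹ᵢ,a¹ₖ] ∈ span_ℂ{a¹_1,…,a¹_m}. -/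
/-! By (E1), `∑ [a¹ᵢ, a¹ₖ] ⊗ (a⁰ᵢ ⊗ a⁰ₖ)` lies in `span{a¹} ⊗ A ⊗ A`. The `a⁰ᵢ ⊗ a⁰ₖ` are
linearly independent, so contracting against a functional dual to one of them extracts the
coefficient `[a¹ᵢ, a¹ₖ]`, and the contraction maps `span{a¹} ⊗ (A ⊗ A)` into `span{a¹}`. -/

open TensorProduct

set_option synthInstance.maxHeartbeats 1000000
set_option maxHeartbeats 1000000

/-- A *geometric classical r-matrix datum* on a commutative ℂ-algebra `A`:
finite families `a¹ᵢ, b¹ⱼ` of derivations and `a⁰ᵢ, b⁰ⱼ` of elements of `A`,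
each linearly independent over ℂ, satisfying the three components (E1)–(E3)
of the classical Yang–Baxter equation. -/
structure GeomRMatrixDatum (A : Type*) [CommRing A] [Algebra ℂ A] where
  m : ℕ
  n : ℕ
  a1 : Fin m → Derivation ℂ A A
  a0 : Fin m → A
  b1 : Fin n → Derivation ℂ A A
  b0 : Fin n → A
  indep_a1 : LinearIndependent ℂ a1
  indep_a0 : LinearIndependent ℂ a0
  indep_b1 : LinearIndependent ℂ b1
  indep_b0 : LinearIndependent ℂ b0
  E1 : ∑ i, ∑ k, (⁅a1 i, a1 k⁆ ⊗ₜ[ℂ] (a0 i ⊗ₜ[ℂ] a0 k))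
      = ∑ i, ∑ k, (a1 i ⊗ₜ[ℂ] ((a1 k) (a0 i) ⊗ₜ[ℂ] a0 k))
      + ∑ i, ∑ l, (a1 i ⊗ₜ[ℂ] (b0 l ⊗ₜ[ℂ] (b1 l) (a0 i)))
  E2 : ∑ j, ∑ k, ((a1 k) (b0 j) ⊗ₜ[ℂ] (b1 j ⊗ₜ[ℂ] a0 k))
      = ∑ j, ∑ k, (b0 j ⊗ₜ[ℂ] (⁅b1 j, a1 k⁆ ⊗ₜ[ℂ] a0 k))
      + ∑ j, ∑ k, (b0 j ⊗ₜ[ℂ] (a1 k ⊗ₜ[ℂ] (b1 j) (a0 k)))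
  E3 : ∑ i, ∑ l, ((a1 i) (b0 l) ⊗ₜ[ℂ] (a0 i ⊗ₜ[ℂ] b1 l))
      + ∑ j, ∑ l, (b0 j ⊗ₜ[ℂ] ((b1 j) (b0 l) ⊗ₜ[ℂ] b1 l))
      + ∑ j, ∑ l, (b0 j ⊗ₜ[ℂ] (b0 l ⊗ₜ[ℂ] ⁅b1 j, b1 l⁆)) = 0

variable {A : Type*} [CommRing A] [Algebra ℂ A]

/-- `V₁ = span_ℂ{a⁰ᵢ}`. -/
def GeomRMatrixDatum.V1 (D : GeomRMatrixDatum A) : Submodule ℂ A :=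
  Submodule.span ℂ (Set.range D.a0)

/-- `V₂ = span_ℂ{b⁰ⱼ}`. -/
def GeomRMatrixDatum.V2 (D : GeomRMatrixDatum A) : Submodule ℂ A :=
  Submodule.span ℂ (Set.range D.b0)

/-- `V = V₁ + V₂`. -/
def GeomRMatrixDatum.V (D : GeomRMatrixDatum A) : Submodule ℂ A := D.V1 ⊔ D.V2

theorem GeomRMatrixDatum.a0_mem_V (D : GeomRMatrixDatum A) (i : Fin D.m) :
    D.a0 i ∈ D.V :=
  Submodule.mem_sup_left (Submodule.subset_span (Set.mem_range_self i))

theorem GeomRMatrixDatum.b0_mem_V (D : GeomRMatrixDatum A) (j : Fin D.n) :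
    D.b0 j ∈ D.V :=
  Submodule.mem_sup_right (Submodule.subset_span (Set.mem_range_self j))

section Contraction

variable {K M N : Type*} [Field K] [AddCommGroup M] [Module K M] [AddCommGroup N] [Module K N]

theorem LinearIndependent.exists_dual_apply_eq_ite {ι : Type*} [DecidableEq ι] {v : ι → N}
    (hv : LinearIndependent K v) (i : ι) :
    ∃ φ : Module.Dual K N, ∀ j, φ (v j) = if j = i then 1 else 0 := by
  obtain ⟨φ, hφ⟩ := LinearMap.exists_extend (Finsupp.lapply i ∘ₗ hv.repr)
  refine ⟨φ, fun j => ?_⟩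
  have hvj : v j ∈ Submodule.span K (Set.range v) := Submodule.subset_span ⟨j, rfl⟩
  rw [show φ (v j) = hv.repr ⟨v j, hvj⟩ i from LinearMap.congr_fun hφ ⟨v j, hvj⟩,
    hv.repr_eq_single j _ rfl, Finsupp.single_apply, eq_comm]

theorem mem_of_sum_tmul_mem_range_rTensor {ι : Type*} [Fintype ι] {P : Submodule K M}
    {v : ι → N} (hv : LinearIndependent K v) {x : ι → M}
    (hx : ∑ j, x j ⊗ₜ[K] v j ∈ LinearMap.range (P.subtype.rTensor N)) (i : ι) : x i ∈ P := by
  classical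
  obtain ⟨φ, hφ⟩ := hv.exists_dual_apply_eq_ite i
  let contract : ∀ (L : Type _) [AddCommGroup L] [Module K L], L ⊗[K] N →ₗ[K] L :=
    fun L _ _ => (TensorProduct.rid K L).toLinearMap ∘ₗ φ.lTensor L
  have h_contract : contract M (∑ j, x j ⊗ₜ[K] v j) = x i := by
    simp [contract, hφ]
  have h_natural : contract M ∘ₗ P.subtype.rTensor N = P.subtype ∘ₗ contract P := by
    ext; simp [contract]
  obtain ⟨s, hs⟩ := hx
  rw [← h_contract, ← hs, ← LinearMap.comp_apply, h_natural]
  exact (contract P s).2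

end Contraction

/-- The span of the `a¹ᵢ` is a Lie subalgebra of `Der(A)`. -/
theorem span_a1_lie_closed (D : GeomRMatrixDatum A) (i k : Fin D.m) :
    ⁅D.a1 i, D.a1 k⁆ ∈ Submodule.span ℂ (Set.range D.a1) := by
  let P := Submodule.span ℂ (Set.range D.a1)
  have ha1_tmul_mem (j : Fin D.m) (y : A ⊗[ℂ] A) :
      D.a1 j ⊗ₜ[ℂ] y ∈ LinearMap.range (P.subtype.rTensor (A ⊗[ℂ] A)) :=
    ⟨⟨D.a1 j, Submodule.subset_span ⟨j, rfl⟩⟩ ⊗ₜ y, rfl⟩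
  have hE1 : ∑ p : Fin D.m × Fin D.m, ⁅D.a1 p.1, D.a1 p.2⁆ ⊗ₜ[ℂ] (D.a0 p.1 ⊗ₜ[ℂ] D.a0 p.2)
      ∈ LinearMap.range (P.subtype.rTensor (A ⊗[ℂ] A)) := by
    rw [Fintype.sum_prod_type, D.E1]
    exact add_mem (sum_mem fun j _ => sum_mem fun _ _ => ha1_tmul_mem j _)
      (sum_mem fun j _ => sum_mem fun _ _ => ha1_tmul_mem j _)
  exact mem_of_sum_tmul_mem_range_rTensor (D.indep_a0.tmul_of_isDomain D.indep_a0) hE1 (i, k)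
end

section
/- Given a geometric classical r-matrix datum on A, for all i,j one has [a¹ᵢ, b¹ⱼ] ∈ span_ℂ{a¹_1,…,a¹_m} + span_ℂ{b¹_1,…,b¹_n}. -/
open TensorProduct

set_option synthInstance.maxHeartbeats 1000000
set_option maxHeartbeats 1000000

variable {A : Type*} [CommRing A] [Algebra ℂ A]

/-!
Contract the component (E2) of the Yang–Baxter equation against a functional on `A` that is dual
to `b⁰ⱼ` (in the first tensor factor) and one dual to `a⁰ᵢ` (in the third). What survives is
`∑ₗ λ(a¹ᵢ b⁰ₗ) b¹ₗ = [b¹ⱼ, a¹ᵢ] + ∑ₖ μ(b¹ⱼ a⁰ₖ) a¹ₖ`, which exhibits `[b¹ⱼ, a¹ᵢ]`, hence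
`[a¹ᵢ, b¹ⱼ]`, as a combination of the `b¹ₗ` and the `a¹ₖ`.
-/

theorem LinearIndependent.exists_linearMap_apply_eq_ite {K V ι : Type*} [Field K] [AddCommGroup V]
    [Module K V] [DecidableEq ι] {v : ι → V} (hv : LinearIndependent K v) (i : ι) :
    ∃ φ : V →ₗ[K] K, ∀ k, φ (v k) = if k = i then 1 else 0 := by
  obtain ⟨φ, hφ⟩ := LinearMap.exists_extend ((Finsupp.lapply i).comp hv.repr)
  refine ⟨φ, fun k => ?_⟩
  have hvk : v k ∈ Submodule.span K (Set.range v) := Submodule.subset_span ⟨k, rfl⟩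
  have := LinearMap.congr_fun hφ ⟨v k, hvk⟩
  simp only [LinearMap.comp_apply, Submodule.subtype_apply, Finsupp.lapply_apply] at this
  rw [this, hv.repr_eq_single k _ rfl, Finsupp.single_apply]

section Contraction

variable {R M N P : Type*} [CommSemiring R] [AddCommMonoid M] [AddCommMonoid N] [AddCommMonoid P]
  [Module R M] [Module R N] [Module R P]

noncomputable def TensorProduct.contractOuter (φ : M →ₗ[R] R) (ψ : P →ₗ[R] R) :
    M ⊗[R] (N ⊗[R] P) →ₗ[R] N :=
  TensorProduct.lift <| φ.smulRight <| TensorProduct.lift <|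
    ((LinearMap.lsmul R N).comp ψ).flip

@[simp]
theorem TensorProduct.contractOuter_tmul (φ : M →ₗ[R] R) (ψ : P →ₗ[R] R) (x : M) (y : N)
    (z : P) : contractOuter φ ψ (x ⊗ₜ[R] (y ⊗ₜ[R] z)) = φ x • ψ z • y := by
  simp [contractOuter]

end Contraction

theorem GeomRMatrixDatum.lie_b1_a1_eq (D : GeomRMatrixDatum A) {i : Fin D.m} {j : Fin D.n}
    {lam mu : A →ₗ[ℂ] ℂ} (hlam : ∀ l, lam (D.b0 l) = if l = j then 1 else 0)
    (hmu : ∀ k, mu (D.a0 k) = if k = i then 1 else 0) :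
    ⁅D.b1 j, D.a1 i⁆
      = ∑ l, lam (D.a1 i (D.b0 l)) • D.b1 l - ∑ k, mu (D.b1 j (D.a0 k)) • D.a1 k := by
  have hE2 := congrArg (contractOuter lam mu) D.E2
  simp only [map_sum, map_add, contractOuter_tmul, hlam, hmu, ite_smul, one_smul, zero_smul,
    smul_zero, smul_ite, Finset.sum_ite_irrel, Finset.sum_const_zero, Finset.sum_ite_eq',
    Finset.mem_univ, if_true] at hE2
  rw [eq_sub_iff_add_eq, hE2]

/-- `[a¹ᵢ, b¹ⱼ]` lies in `span{a¹} + span{b¹}`. -/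
theorem bracket_a1_b1_mem (D : GeomRMatrixDatum A) (i : Fin D.m) (j : Fin D.n) :
    ⁅D.a1 i, D.b1 j⁆
      ∈ Submodule.span ℂ (Set.range D.a1) ⊔ Submodule.span ℂ (Set.range D.b1) := by
  classical
  obtain ⟨lam, hlam⟩ := D.indep_b0.exists_linearMap_apply_eq_ite j
  obtain ⟨mu, hmu⟩ := D.indep_a0.exists_linearMap_apply_eq_ite i
  rw [← lie_skew, D.lie_b1_a1_eq hlam hmu]
  refine Submodule.neg_mem _ (Submodule.sub_mem _ (Submodule.mem_sup_right ?_)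
    (Submodule.mem_sup_left ?_)) <;>
  exact (Submodule.mem_span_range_iff_exists_fun ℂ).mpr ⟨_, rfl⟩
end

section
/- Given a geometric classical r-matrix datum on A with V invariant under every a¹ᵢ and b¹ⱼ, the bracket [x,y] := x∘y + y⋆x makes the dual space V* into a Lie algebra over ℂ: it is bilinear, satisfies [x,y] = −[y,x], and satisfies the Jacobi identity [x,[y,z]] + [y,[z,x]] + [z,[x,y]] = 0 for all x,y,z ∈ V*. -/
open TensorProduct

set_option synthInstance.maxHeartbeats 1000000
set_option maxHeartbeats 1000000

variable {A : Type*} [CommRing A] [Algebra ℂ A]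

/-- The operation `(x⋆y)(f) = Σᵢ x(a⁰ᵢ)·y(a¹ᵢ f)` on `V* = Module.Dual ℂ V`. -/
noncomputable def starOp (D : GeomRMatrixDatum A)
    (hA : ∀ i : Fin D.m, ∀ f ∈ D.V, D.a1 i f ∈ D.V)
    (x y : Module.Dual ℂ D.V) : Module.Dual ℂ D.V :=
  ∑ i, x ⟨D.a0 i, D.a0_mem_V i⟩ • (y ∘ₗ ((D.a1 i).toLinearMap.restrict (hA i)))

/-- The operation `(x∘y)(f) = Σⱼ y(b⁰ⱼ)·x(b¹ⱼ f)` on `V* = Module.Dual ℂ V`. -/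
noncomputable def circOp (D : GeomRMatrixDatum A)
    (hB : ∀ j : Fin D.n, ∀ f ∈ D.V, D.b1 j f ∈ D.V)
    (x y : Module.Dual ℂ D.V) : Module.Dual ℂ D.V :=
  ∑ j, y ⟨D.b0 j, D.b0_mem_V j⟩ • (x ∘ₗ ((D.b1 j).toLinearMap.restrict (hB j)))

/-- The bracket `[x,y] = x∘y + y⋆x` on `V*`. -/
noncomputable def bracketOp (D : GeomRMatrixDatum A)
    (hA : ∀ i : Fin D.m, ∀ f ∈ D.V, D.a1 i f ∈ D.V)
    (hB : ∀ j : Fin D.n, ∀ f ∈ D.V, D.b1 j f ∈ D.V)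
    (x y : Module.Dual ℂ D.V) : Module.Dual ℂ D.V :=
  circOp D hB x y + starOp D hA y x

/-!
Let `♯ = sharp : A* → Der(A)`, `♯φ = Σᵢ φ(a⁰ᵢ) a¹ᵢ + Σⱼ φ(b⁰ⱼ) b¹ⱼ`. Extending `x, y ∈ V*` to `A`,
the bracket is `[x, y] = x ∘ ♯y` restricted to `V`. Contracting (E1)–(E3) with `φ ⊗ ψ` in the
two function slots gives three commutator identities in `Der(A)`. Symmetrising those from (E1)
and (E3) in `φ, ψ` and using the linear independence of the `a¹ᵢ` and of the `b¹ⱼ` gives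
`φ(♯ψ g) + ψ(♯φ g) = 0` for `g ∈ V`, which is antisymmetry; combining all three gives
`♯(φ ∘ ♯ψ) = [♯φ, ♯ψ]`, which is the Leibniz rule `[x,[y,z]] = [[x,y],z] - [[x,z],y]`,
equivalent to Jacobi given antisymmetry.
-/

section DualBracket

variable {R W : Type*} [CommRing R] [AddCommGroup W] [Module R W]
  (N : Module.Dual R W →ₗ[R] Module.End R W)

theorem comp_eq_neg_comp_of_skew
    (hskew : ∀ (x y : Module.Dual R W) w, x (N y w) + y (N x w) = 0) (x y : Module.Dual R W) :
    x ∘ₗ N y = -(y ∘ₗ N x) :=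
  LinearMap.ext fun w => eq_neg_of_add_eq_zero_left (hskew x y w)

theorem jacobi_of_skew_of_lie
    (hskew : ∀ (x y : Module.Dual R W) w, x (N y w) + y (N x w) = 0)
    (hlie : ∀ x y, N (x ∘ₗ N y) = ⁅N x, N y⁆) (x y z : Module.Dual R W) :
    x ∘ₗ N (y ∘ₗ N z) + y ∘ₗ N (z ∘ₗ N x) + z ∘ₗ N (x ∘ₗ N y) = 0 := by
  have leibniz : x ∘ₗ N (y ∘ₗ N z) = (x ∘ₗ N y) ∘ₗ N z - (x ∘ₗ N z) ∘ₗ N y := by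
    rw [hlie, Ring.lie_def, LinearMap.comp_sub]
    rfl
  have skew := comp_eq_neg_comp_of_skew N hskew
  rw [leibniz, skew (x ∘ₗ N y) z, skew (x ∘ₗ N z) y, skew x z, map_neg, LinearMap.comp_neg]
  abel

end DualBracket

theorem Derivation.finset_sum_apply {R B M ι : Type*} [CommSemiring R] [CommSemiring B]
    [Algebra R B] [AddCommMonoid M] [Module B M] [Module R M] (s : Finset ι)
    (d : ι → Derivation R B M) (a : B) : (∑ i ∈ s, d i) a = ∑ i ∈ s, d i a := by
  rw [← Derivation.coeFnAddMonoidHom_apply, map_sum, Finset.sum_apply]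
  rfl

namespace GeomRMatrixDatum

section Sharp

variable (D : GeomRMatrixDatum A)

noncomputable def sharpA : Module.Dual ℂ A →ₗ[ℂ] Derivation ℂ A A :=
  ∑ i, (Module.Dual.eval ℂ A (D.a0 i)).smulRight (D.a1 i)

noncomputable def sharpB : Module.Dual ℂ A →ₗ[ℂ] Derivation ℂ A A :=
  ∑ j, (Module.Dual.eval ℂ A (D.b0 j)).smulRight (D.b1 j)

noncomputable def sharp : Module.Dual ℂ A →ₗ[ℂ] Derivation ℂ A A := D.sharpA + D.sharpB

lemma sharpA_apply (φ : Module.Dual ℂ A) : D.sharpA φ = ∑ i, φ (D.a0 i) • D.a1 i := by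
  simp [sharpA]

lemma sharpB_apply (φ : Module.Dual ℂ A) : D.sharpB φ = ∑ j, φ (D.b0 j) • D.b1 j := by
  simp [sharpB]

lemma lie_sharpA_sharpA (φ ψ : Module.Dual ℂ A) :
    ⁅D.sharpA φ, D.sharpA ψ⁆ = D.sharpA (φ ∘ₗ D.sharpA ψ) + D.sharpA (ψ ∘ₗ D.sharpB φ) := by
  have H := congrArg ((TensorProduct.rid ℂ (Derivation ℂ A A)).toLinearMap ∘ₗ
    LinearMap.lTensor _ (TensorProduct.dualDistrib ℂ A A (φ ⊗ₜ ψ))) D.E1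
  simp only [map_sum, map_add, LinearMap.comp_apply, LinearMap.lTensor_tmul,
    TensorProduct.dualDistrib_apply, LinearEquiv.coe_coe, TensorProduct.rid_tmul] at H
  simp only [sharpA_apply, sharpB_apply, lie_sum, sum_lie, smul_lie, lie_smul,
    LinearMap.comp_apply, Derivation.coeFn_coe, Derivation.finset_sum_apply,
    Derivation.smul_apply, map_sum, map_smul, smul_eq_mul, Finset.sum_smul, Finset.smul_sum,
    smul_smul]
  rw [Finset.sum_comm]
  simpa only [mul_comm] using H

lemma lie_sharpB_sharpA (φ ψ : Module.Dual ℂ A) :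
    ⁅D.sharpB φ, D.sharpA ψ⁆ = D.sharpB (φ ∘ₗ D.sharpA ψ) - D.sharpA (ψ ∘ₗ D.sharpB φ) := by
  have H := congrArg ((TensorProduct.lid ℂ (Derivation ℂ A A)).toLinearMap ∘ₗ
    TensorProduct.map φ ((TensorProduct.rid ℂ (Derivation ℂ A A)).toLinearMap ∘ₗ
      LinearMap.lTensor _ ψ)) D.E2
  simp only [map_sum, map_add, LinearMap.comp_apply, TensorProduct.map_tmul,
    LinearMap.lTensor_tmul, LinearEquiv.coe_coe, TensorProduct.rid_tmul, TensorProduct.lid_tmul,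
    smul_smul] at H
  rw [eq_sub_iff_add_eq, eq_comm]
  simp only [sharpA_apply, sharpB_apply, lie_sum, sum_lie, smul_lie, lie_smul,
    LinearMap.comp_apply, Derivation.coeFn_coe, Derivation.finset_sum_apply,
    Derivation.smul_apply, map_sum, map_smul, smul_eq_mul, Finset.sum_smul, Finset.smul_sum,
    smul_smul]
  simpa only [mul_comm, Finset.sum_comm (s := (Finset.univ : Finset (Fin D.m)))
    (t := (Finset.univ : Finset (Fin D.n)))] using H

lemma lie_sharpB_sharpB (φ ψ : Module.Dual ℂ A) :
    ⁅D.sharpB φ, D.sharpB ψ⁆ = -(D.sharpB (φ ∘ₗ D.sharpA ψ) + D.sharpB (ψ ∘ₗ D.sharpB φ)) := by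
  have H := congrArg ((TensorProduct.lid ℂ (Derivation ℂ A A)).toLinearMap ∘ₗ
    TensorProduct.map φ ((TensorProduct.lid ℂ (Derivation ℂ A A)).toLinearMap ∘ₗ
      LinearMap.rTensor _ ψ)) D.E3
  simp only [map_sum, map_add, map_zero, LinearMap.comp_apply, TensorProduct.map_tmul,
    LinearMap.rTensor_tmul, LinearEquiv.coe_coe, TensorProduct.lid_tmul, smul_smul] at H
  rw [eq_neg_iff_add_eq_zero, add_comm, ← H]
  simp only [sharpA_apply, sharpB_apply, sum_lie, LinearMap.comp_apply, Derivation.coeFn_coe,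
    Derivation.finset_sum_apply, Derivation.smul_apply, map_sum, map_smul, smul_eq_mul,
    Finset.sum_smul]
  simp only [lie_sum, smul_lie, lie_smul, smul_smul]
  congr 1; congr 1
  · rw [Finset.sum_comm]
    simp only [mul_comm]
  · exact Finset.sum_comm
  · simp only [mul_comm]

lemma sharpA_comp_sharp_add (φ ψ : Module.Dual ℂ A) :
    D.sharpA (φ ∘ₗ D.sharp ψ + ψ ∘ₗ D.sharp φ) = 0 := by
  have h₁ := D.lie_sharpA_sharpA φ ψ
  have h₂ := D.lie_sharpA_sharpA ψ φ
  simp only [sharp, LinearMap.add_apply, Derivation.coe_add_linearMap, LinearMap.comp_add,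
    map_add]
  linear_combination (norm := module) -h₁ - h₂ - lie_skew (D.sharpA φ) (D.sharpA ψ)

lemma sharpB_comp_sharp_add (φ ψ : Module.Dual ℂ A) :
    D.sharpB (φ ∘ₗ D.sharp ψ + ψ ∘ₗ D.sharp φ) = 0 := by
  have h₁ := D.lie_sharpB_sharpB φ ψ
  have h₂ := D.lie_sharpB_sharpB ψ φ
  simp only [sharp, LinearMap.add_apply, Derivation.coe_add_linearMap, LinearMap.comp_add,
    map_add]
  linear_combination (norm := module) h₁ + h₂ + lie_skew (D.sharpB φ) (D.sharpB ψ)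

lemma sharp_comp_sharp (φ ψ : Module.Dual ℂ A) :
    D.sharp (φ ∘ₗ D.sharp ψ) = ⁅D.sharp φ, D.sharp ψ⁆ := by
  have hAA := D.lie_sharpA_sharpA φ ψ
  have hBA := D.lie_sharpB_sharpA φ ψ
  have hAB := D.lie_sharpB_sharpA ψ φ
  have hBB := D.lie_sharpB_sharpB φ ψ
  have hskew := D.sharpB_comp_sharp_add φ ψ
  simp only [sharp, LinearMap.add_apply, Derivation.coe_add_linearMap, LinearMap.comp_add,
    map_add, add_lie, lie_add] at hskew ⊢
  linear_combination (norm := module)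
    -hAA - hBA + hAB - hBB + hskew + lie_skew (D.sharpA φ) (D.sharpB ψ)

lemma V_le_ker {M : Type*} [AddCommGroup M] [Module ℂ M] (f : A →ₗ[ℂ] M)
    (ha : ∀ i, f (D.a0 i) = 0) (hb : ∀ j, f (D.b0 j) = 0) : D.V ≤ LinearMap.ker f := by
  refine sup_le (Submodule.span_le.mpr ?_) (Submodule.span_le.mpr ?_) <;> rintro _ ⟨k, rfl⟩
  exacts [ha k, hb k]

lemma apply_a0_eq_zero_of_sharpA_eq_zero {χ : Module.Dual ℂ A} (h : D.sharpA χ = 0)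
    (i : Fin D.m) : χ (D.a0 i) = 0 :=
  Fintype.linearIndependent_iff.mp D.indep_a1 (fun i => χ (D.a0 i)) (by rwa [← sharpA_apply]) i

lemma apply_b0_eq_zero_of_sharpB_eq_zero {χ : Module.Dual ℂ A} (h : D.sharpB χ = 0)
    (j : Fin D.n) : χ (D.b0 j) = 0 :=
  Fintype.linearIndependent_iff.mp D.indep_b1 (fun j => χ (D.b0 j)) (by rwa [← sharpB_apply]) j

lemma apply_sharp_add_apply_sharp {g : A} (hg : g ∈ D.V) (φ ψ : Module.Dual ℂ A) :
    φ (D.sharp ψ g) + ψ (D.sharp φ g) = 0 :=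
  LinearMap.mem_ker.mp <| D.V_le_ker (φ ∘ₗ D.sharp ψ + ψ ∘ₗ D.sharp φ)
    (D.apply_a0_eq_zero_of_sharpA_eq_zero (D.sharpA_comp_sharp_add φ ψ))
    (D.apply_b0_eq_zero_of_sharpB_eq_zero (D.sharpB_comp_sharp_add φ ψ)) hg

end Sharp

variable (D : GeomRMatrixDatum A) (hA : ∀ i : Fin D.m, ∀ f ∈ D.V, D.a1 i f ∈ D.V)
  (hB : ∀ j : Fin D.n, ∀ f ∈ D.V, D.b1 j f ∈ D.V)

noncomputable def sharpV : Module.Dual ℂ D.V →ₗ[ℂ] Module.End ℂ D.V :=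
  ∑ i, (Module.Dual.eval ℂ D.V ⟨D.a0 i, D.a0_mem_V i⟩).smulRight
      ((D.a1 i).toLinearMap.restrict (hA i)) +
    ∑ j, (Module.Dual.eval ℂ D.V ⟨D.b0 j, D.b0_mem_V j⟩).smulRight
      ((D.b1 j).toLinearMap.restrict (hB j))

lemma bracketOp_eq_comp_sharpV (x y : Module.Dual ℂ D.V) :
    bracketOp D hA hB x y = x ∘ₗ D.sharpV hA hB y := by
  ext f
  simp [bracketOp, circOp, starOp, sharpV, add_comm]

variable {D hA hB} in
lemma coe_sharpV_apply {y : Module.Dual ℂ D.V} {φ : Module.Dual ℂ A}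
    (hφ : φ ∘ₗ D.V.subtype = y) (f : D.V) : (D.sharpV hA hB y f : A) = D.sharp φ f := by
  subst hφ
  simp [sharpV, sharp, sharpA_apply, sharpB_apply, Derivation.finset_sum_apply]

lemma sharpV_skew (x y : Module.Dual ℂ D.V) (f : D.V) :
    x (D.sharpV hA hB y f) + y (D.sharpV hA hB x f) = 0 := by
  obtain ⟨φ, rfl⟩ := LinearMap.exists_extend x
  obtain ⟨ψ, rfl⟩ := LinearMap.exists_extend y
  simpa [coe_sharpV_apply rfl] using D.apply_sharp_add_apply_sharp f.2 φ ψ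

lemma sharpV_comp_sharpV (x y : Module.Dual ℂ D.V) :
    D.sharpV hA hB (x ∘ₗ D.sharpV hA hB y) = ⁅D.sharpV hA hB x, D.sharpV hA hB y⁆ := by
  obtain ⟨φ, rfl⟩ := LinearMap.exists_extend x
  obtain ⟨ψ, rfl⟩ := LinearMap.exists_extend y
  have hext : (φ ∘ₗ D.sharp ψ) ∘ₗ D.V.subtype
      = (φ ∘ₗ D.V.subtype) ∘ₗ D.sharpV hA hB (ψ ∘ₗ D.V.subtype) := by
    ext f
    simp [coe_sharpV_apply rfl]
  ext f
  rw [← hext, coe_sharpV_apply rfl, sharp_comp_sharp, Ring.lie_def, LinearMap.sub_apply,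
    Submodule.coe_sub, Module.End.mul_apply, Module.End.mul_apply, coe_sharpV_apply rfl,
    coe_sharpV_apply rfl, coe_sharpV_apply rfl, coe_sharpV_apply rfl,
    Derivation.commutator_apply]

end GeomRMatrixDatum

/-- The bracket `[x,y] = x∘y + y⋆x` makes `V*` into a Lie algebra: it is bilinear,
antisymmetric, and satisfies the Jacobi identity. -/
theorem bracketOp_lieAlgebra (D : GeomRMatrixDatum A)
    (hA : ∀ i : Fin D.m, ∀ f ∈ D.V, D.a1 i f ∈ D.V)
    (hB : ∀ j : Fin D.n, ∀ f ∈ D.V, D.b1 j f ∈ D.V) :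
    (∀ (x x₂ y : Module.Dual ℂ D.V),
      bracketOp D hA hB (x + x₂) y = bracketOp D hA hB x y + bracketOp D hA hB x₂ y) ∧
    (∀ (c : ℂ) (x y : Module.Dual ℂ D.V),
      bracketOp D hA hB (c • x) y = c • bracketOp D hA hB x y) ∧
    (∀ (x y y₂ : Module.Dual ℂ D.V),
      bracketOp D hA hB x (y + y₂) = bracketOp D hA hB x y + bracketOp D hA hB x y₂) ∧
    (∀ (c : ℂ) (x y : Module.Dual ℂ D.V),
      bracketOp D hA hB x (c • y) = c • bracketOp D hA hB x y) ∧
    (∀ x y : Module.Dual ℂ D.V, bracketOp D hA hB x y = - bracketOp D hA hB y x) ∧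
    (∀ x y z : Module.Dual ℂ D.V,
      bracketOp D hA hB x (bracketOp D hA hB y z)
        + bracketOp D hA hB y (bracketOp D hA hB z x)
        + bracketOp D hA hB z (bracketOp D hA hB x y) = 0) := by
  simp only [D.bracketOp_eq_comp_sharpV hA hB]
  exact ⟨fun x x₂ y => LinearMap.add_comp _ _ _, fun c x y => LinearMap.smul_comp _ _ _,
    fun x y y₂ => by rw [map_add, LinearMap.comp_add],
    fun c x y => by rw [map_smul, LinearMap.comp_smul],
    comp_eq_neg_comp_of_skew _ (D.sharpV_skew hA hB),
    jacobi_of_skew_of_lie _ (D.sharpV_skew hA hB) (D.sharpV_comp_sharpV hA hB)⟩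
end

section
/- Given a geometric classical r-matrix datum on A with V invariant under every a¹ᵢ and b¹ⱼ, for all x,y ∈ V* the following two identities hold in Der(A): Σ_{i,k} x(a⁰ᵢ)y(a⁰ₖ)[a¹ᵢ,a¹ₖ] = −Σᵢ ((x⋆y)(a⁰ᵢ) + (x∘y)(a⁰ᵢ))·a¹ᵢ, and Σ_{j,l} x(b⁰ⱼ)y(b⁰ₗ)[b¹ⱼ,b¹ₗ] = Σⱼ ((x⋆y)(b⁰ⱼ) + (x∘y)(b⁰ⱼ))·b¹ⱼ. -/
/-! Extend `x, y` to functionals `x', y'` on all of `A` (ℂ is a field), so that `x⋆y` and `x∘y`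
are given by the same sums with `x', y'` in place of `x, y`. Applying `id ⊗ y' ⊗ x'` to (E1) and
`y' ⊗ x' ⊗ id` to (E3) yields the two identities with `x` and `y` exchanged on the left-hand
side; antisymmetry of the bracket exchanges them back. -/

open TensorProduct

set_option synthInstance.maxHeartbeats 1000000
set_option maxHeartbeats 1000000

variable {A : Type*} [CommRing A] [Algebra ℂ A]

theorem sum_sum_smul_lie_swap {R L ι : Type*} [CommSemiring R] [LieRing L] [Module R L]
    [Fintype ι] (f : ι → L) (c d : ι → R) :
    ∑ i, ∑ k, (c i * d k) • ⁅f i, f k⁆ = -∑ i, ∑ k, (d i * c k) • ⁅f i, f k⁆ := by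
  rw [Finset.sum_comm]
  simp only [← Finset.sum_neg_distrib, ← smul_neg, lie_skew, mul_comm]

namespace GeomRMatrixDatum

theorem E1_contract (D : GeomRMatrixDatum A) (φ ψ : Module.Dual ℂ A) :
    ∑ i, ∑ k, (φ (D.a0 i) * ψ (D.a0 k)) • ⁅D.a1 i, D.a1 k⁆
      = ∑ i, (∑ k, ψ (D.a0 k) * φ (D.a1 k (D.a0 i))
          + ∑ l, φ (D.b0 l) * ψ (D.b1 l (D.a0 i))) • D.a1 i := by
  have h := congrArg ((TensorProduct.rid ℂ (Derivation ℂ A A)).toLinearMap ∘ₗ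
    LinearMap.lTensor _ (TensorProduct.lift (φ.smulRight ψ))) D.E1
  simp only [map_sum, LinearMap.comp_apply, LinearMap.lTensor_tmul, TensorProduct.lift.tmul,
    LinearMap.smulRight_apply, LinearEquiv.coe_coe, TensorProduct.rid_tmul, map_add,
    LinearMap.smul_apply, smul_eq_mul] at h
  rw [h]
  simp only [add_smul, Finset.sum_smul, Finset.sum_add_distrib, mul_comm (ψ (D.a0 _))]

theorem E3_contract (D : GeomRMatrixDatum A) (φ ψ : Module.Dual ℂ A) :
    ∑ j, ∑ l, (φ (D.b0 j) * ψ (D.b0 l)) • ⁅D.b1 j, D.b1 l⁆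
      = -∑ l, (∑ i, ψ (D.a0 i) * φ (D.a1 i (D.b0 l))
          + ∑ j, φ (D.b0 j) * ψ (D.b1 j (D.b0 l))) • D.b1 l := by
  have h := congrArg (TensorProduct.lift (φ.smulRight
    (TensorProduct.lift (ψ.smulRight (LinearMap.id (M := Derivation ℂ A A)))))) D.E3
  simp only [map_sum, map_add, map_zero, TensorProduct.lift.tmul, LinearMap.smulRight_apply,
    LinearMap.smul_apply, smul_smul] at h
  rw [eq_neg_iff_add_eq_zero, ← h, add_comm]
  simp only [add_smul, Finset.sum_smul, Finset.sum_add_distrib, mul_comm (ψ (D.a0 _))]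
  congr 2 <;> exact Finset.sum_comm

end GeomRMatrixDatum

theorem starOp_comp_subtype_apply (D : GeomRMatrixDatum A)
    (hA : ∀ i : Fin D.m, ∀ f ∈ D.V, D.a1 i f ∈ D.V) (φ ψ : Module.Dual ℂ A) (f : D.V) :
    starOp D hA (φ ∘ₗ D.V.subtype) (ψ ∘ₗ D.V.subtype) f = ∑ i, φ (D.a0 i) * ψ (D.a1 i f) := by
  simp [starOp]

theorem circOp_comp_subtype_apply (D : GeomRMatrixDatum A)
    (hB : ∀ j : Fin D.n, ∀ f ∈ D.V, D.b1 j f ∈ D.V) (φ ψ : Module.Dual ℂ A) (f : D.V) :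
    circOp D hB (φ ∘ₗ D.V.subtype) (ψ ∘ₗ D.V.subtype) f = ∑ j, ψ (D.b0 j) * φ (D.b1 j f) := by
  simp [circOp]

/-- Equation (3.1)/(3.2) of the paper: `Σ x(a⁰ᵢ)y(a⁰ₖ)[a¹ᵢ,a¹ₖ] = −Σ ((x⋆y)(a⁰ᵢ)+(x∘y)(a⁰ᵢ))·a¹ᵢ`
and `Σ x(b⁰ⱼ)y(b⁰ₗ)[b¹ⱼ,b¹ₗ] = Σ ((x⋆y)(b⁰ⱼ)+(x∘y)(b⁰ⱼ))·b¹ⱼ` in `Der(A)`. -/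
theorem bracket_identities_in_der (D : GeomRMatrixDatum A)
    (hA : ∀ i : Fin D.m, ∀ f ∈ D.V, D.a1 i f ∈ D.V)
    (hB : ∀ j : Fin D.n, ∀ f ∈ D.V, D.b1 j f ∈ D.V)
    (x y : Module.Dual ℂ D.V) :
    (∑ i, ∑ k, (x ⟨D.a0 i, D.a0_mem_V i⟩ * y ⟨D.a0 k, D.a0_mem_V k⟩) • ⁅D.a1 i, D.a1 k⁆
      = - ∑ i, (starOp D hA x y ⟨D.a0 i, D.a0_mem_V i⟩
          + circOp D hB x y ⟨D.a0 i, D.a0_mem_V i⟩) • D.a1 i) ∧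
    (∑ j, ∑ l, (x ⟨D.b0 j, D.b0_mem_V j⟩ * y ⟨D.b0 l, D.b0_mem_V l⟩) • ⁅D.b1 j, D.b1 l⁆
      = ∑ j, (starOp D hA x y ⟨D.b0 j, D.b0_mem_V j⟩
          + circOp D hB x y ⟨D.b0 j, D.b0_mem_V j⟩) • D.b1 j) := by
  obtain ⟨x', rfl⟩ := LinearMap.exists_extend x
  obtain ⟨y', rfl⟩ := LinearMap.exists_extend y
  simp only [starOp_comp_subtype_apply, circOp_comp_subtype_apply, LinearMap.comp_apply,
    Submodule.subtype_apply]
  constructor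
  · rw [sum_sum_smul_lie_swap, D.E1_contract]
  · rw [sum_sum_smul_lie_swap, D.E3_contract, neg_neg]
end

section
/- Given a geometric classical r-matrix datum on A with V invariant under every a¹ᵢ and b¹ⱼ, for all x,y,z ∈ V* the following identity holds in V*: ((z⋆y)∘x) − (z⋆(y∘x)) − ((z∘x)⋆y) + (y∘(z⋆x)) = 0. -/
open TensorProduct

set_option synthInstance.maxHeartbeats 1000000
set_option maxHeartbeats 1000000

variable {A : Type*} [CommRing A] [Algebra ℂ A]

/-! Extend `x, y, z` to functionals `X, Y, Z` on all of `A` and evaluate at `f ∈ V`. Each of the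
four terms becomes a double sum over `(j, k)`, and their alternating sum is what one gets by
contracting (E2) against `X ⊗ (d ↦ Y (d f)) ⊗ Z` and expanding
`[b¹ⱼ, a¹ₖ] f = b¹ⱼ (a¹ₖ f) - a¹ₖ (b¹ⱼ f)`. -/

namespace Derivation

variable {R S M : Type*} [CommSemiring R] [CommSemiring S] [Algebra R S] [AddCommMonoid M]
  [Module S M] [Module R M] [SMulCommClass R S M]

def evalₗ (a : S) : Derivation R S M →ₗ[R] M where
  toFun D := D a
  map_add' _ _ := rfl
  map_smul' _ _ := rfl

@[simp]
theorem evalₗ_apply (a : S) (D : Derivation R S M) : evalₗ a D = D a := rfl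

end Derivation

theorem GeomRMatrixDatum.E2_contract (D : GeomRMatrixDatum A) (X Y Z : Module.Dual ℂ A) (f : A) :
    ∑ j, ∑ k, X (D.a1 k (D.b0 j)) * (Y (D.b1 j f) * Z (D.a0 k))
      = ∑ j, ∑ k, X (D.b0 j) * (Y (⁅D.b1 j, D.a1 k⁆ f) * Z (D.a0 k))
      + ∑ j, ∑ k, X (D.b0 j) * (Y (D.a1 k f) * Z (D.b1 j (D.a0 k))) := by
  simpa using congrArg
    (TensorProduct.lift (X.smulRight (TensorProduct.lift ((Y ∘ₗ Derivation.evalₗ f).smulRight Z))))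
    D.E2

theorem starOp_apply (D : GeomRMatrixDatum A) (hA : ∀ i : Fin D.m, ∀ f ∈ D.V, D.a1 i f ∈ D.V)
    (x y : Module.Dual ℂ D.V) (f : D.V) :
    starOp D hA x y f = ∑ i, x ⟨D.a0 i, D.a0_mem_V i⟩ * y ⟨D.a1 i f, hA i f f.2⟩ := by
  simp only [starOp, LinearMap.coe_sum, Finset.sum_apply, LinearMap.smul_apply,
    LinearMap.comp_apply, LinearMap.restrict_apply, Derivation.coeFn_coe, smul_eq_mul]

theorem circOp_apply (D : GeomRMatrixDatum A) (hB : ∀ j : Fin D.n, ∀ f ∈ D.V, D.b1 j f ∈ D.V)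
    (x y : Module.Dual ℂ D.V) (f : D.V) :
    circOp D hB x y f = ∑ j, y ⟨D.b0 j, D.b0_mem_V j⟩ * x ⟨D.b1 j f, hB j f f.2⟩ := by
  simp only [circOp, LinearMap.coe_sum, Finset.sum_apply, LinearMap.smul_apply,
    LinearMap.comp_apply, LinearMap.restrict_apply, Derivation.coeFn_coe, smul_eq_mul]

/-- The mixed associativity identity `((z⋆y)∘x) − (z⋆(y∘x)) − ((z∘x)⋆y) + (y∘(z⋆x)) = 0`. -/
theorem star_circ_mixed_identity (D : GeomRMatrixDatum A)
    (hA : ∀ i : Fin D.m, ∀ f ∈ D.V, D.a1 i f ∈ D.V)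
    (hB : ∀ j : Fin D.n, ∀ f ∈ D.V, D.b1 j f ∈ D.V)
    (x y z : Module.Dual ℂ D.V) :
    circOp D hB (starOp D hA z y) x - starOp D hA z (circOp D hB y x)
      - starOp D hA (circOp D hB z x) y + circOp D hB y (starOp D hA z x) = 0 := by
  obtain ⟨X, rfl⟩ := LinearMap.exists_extend x
  obtain ⟨Y, rfl⟩ := LinearMap.exists_extend y
  obtain ⟨Z, rfl⟩ := LinearMap.exists_extend z
  ext f
  have E2 := D.E2_contract X Y Z f
  simp only [LinearMap.add_apply, LinearMap.sub_apply, LinearMap.zero_apply, circOp_apply,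
    starOp_apply, LinearMap.comp_apply, Submodule.subtype_apply, Derivation.commutator_apply,
    map_sub, mul_sub, Finset.sum_sub_distrib, Finset.mul_sum,
    Finset.sum_comm (s := (Finset.univ : Finset (Fin D.m))), mul_comm, mul_left_comm] at E2 ⊢
  linear_combination E2
end

section
/- Let 𝔤 and 𝔞 be finite-dimensional Lie algebras over ℂ, θ: 𝔤 → Der(𝔞) a Lie algebra homomorphism, 𝔞⋊𝔤 the semidirect product Lie algebra, π: 𝔤 → 𝔞 a bijective 1-cocycle, A a commutative ℂ-algebra, ρ: 𝔞⋊𝔤 → Der(A) a Lie algebra homomorphism, and u: 𝔞* → A a ℂ-linear map satisfying ρ(v)(u(ξ)) = −u(ξ∘ad_v) for all v ∈ 𝔞⋊𝔤 and ξ ∈ 𝔞*. Fix a basis (v₁,…,v_d) of 𝔞 with dual basis (v¹,…,v^d), and set a¹ₘ := −ρ(0, π⁻¹(vₘ)) ∈ Der(A), a⁰ₘ := u(v^m) ∈ A, b⁰ₘ := u(v^m) ∈ A, b¹ₘ := ρ(vₘ, π⁻¹(vₘ)) ∈ Der(A) for m = 1,…,d. Then these families satisfy the three component classical Yang–Baxter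 equations (all tensor products over ℂ, sums over all repeated indices from 1 to d): (E1) Σ[a¹ᵢ,a¹ₖ]⊗a⁰ᵢ⊗a⁰ₖ = Σ a¹ᵢ⊗(a¹ₖ a⁰ᵢ)⊗a⁰ₖ + Σ a¹ᵢ⊗b⁰ₗ⊗(b¹ₗ a⁰ᵢ) in Der(A)⊗A⊗A; (E2) Σ(a¹ₖ b⁰ⱼ)⊗b¹ⱼ⊗a⁰ₖ = Σ b⁰ⱼ⊗[b¹ⱼ,a¹ₖ]⊗a⁰ₖ + Σ b⁰ⱼ⊗a¹ₖ⊗(b¹ⱼ a⁰ₖ) in A⊗Der(A)⊗A; (E3) Σ(a¹ᵢ b⁰ₗ)⊗a⁰ᵢ⊗b¹ₗ + Σ b⁰ⱼ⊗(b¹ⱼ b⁰ₗ)⊗b¹ₗ + Σ b⁰ⱼ⊗b⁰ₗ⊗[b¹ⱼ,b¹ₗ] = 0 in A⊗A⊗Der(A). -/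
/-!
Write `x ▷ y = θ(π⁻¹x)(y)` and `D x = (x ▷ ·) + ad x`, the action of `(x, π⁻¹x) ∈ 𝔞 ⋊ 𝔤` on `𝔞`.
The cocycle identity says that `x ↦ (x, π⁻¹x)` carries `π[π⁻¹x, π⁻¹y] = D x y - y ▷ x` to the
semidirect bracket, so brackets of `a¹(x) = -ρ(0, π⁻¹x)` and `b¹(x) = ρ(x, π⁻¹x)` are again values
of `a¹`, `b¹` at `y ▷ x` and `D x y`, while equivariance of `u` makes `a¹(x)` and `b¹(x)` act on
`u(ξ)` as `u(ξ ∘ (x ▷ ·))` and `-u(ξ ∘ D x)`. Since `∑ L vᵢ ⊗ vⁱ = ∑ vᵢ ⊗ (vⁱ ∘ L)`, each such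
action on a factor `u(vⁱ)` can be moved onto the basis vector paired with it, and then each of
(E1)–(E3) is a cancellation between two double sums.
-/

open TensorProduct

theorem Module.Basis.sum_apply_coord_comp {ι K V P : Type*} [Fintype ι] [CommRing K]
    [AddCommGroup V] [Module K V] [AddCommGroup P] [Module K P] (b : Module.Basis ι K V)
    (F : V →ₗ[K] Module.Dual K V →ₗ[K] P) (L : Module.End K V) :
    ∑ i, F (b i) (b.coord i ∘ₗ L) = ∑ i, F (L (b i)) (b.coord i) := by
  conv_lhs => enter [2, i]; rw [← b.sum_dual_apply_smul_coord (b.coord i ∘ₗ L)]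
  conv_rhs => enter [2, i]; rw [← b.sum_repr (L (b i))]
  simp only [map_sum, map_smul, LinearMap.sum_apply, LinearMap.smul_apply]
  exact Finset.sum_comm

namespace CocycleTuple

variable {K g a A : Type*} [CommRing K] [LieRing g] [LieAlgebra K g] [LieRing a]
  [LieAlgebra K a] [CommRing A] [Algebra K A]
  (θ : g →ₗ⁅K⁆ LieDerivation K a a) (π : g ≃ₗ[K] a) (ρ : (a × g) →ₗ[K] Derivation K A A)
  (u : Module.Dual K a →ₗ[K] A)

def IsOneCocycle : Prop :=
  ∀ x y : g, π ⁅x, y⁆ = θ x (π y) - θ y (π x) + ⁅π x, π y⁆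

def IsSemidirectLieHom : Prop :=
  ∀ p q : a × g, ρ (θ p.2 q.1 - θ q.2 p.1 + ⁅p.1, q.1⁆, ⁅p.2, q.2⁆) = ⁅ρ p, ρ q⁆

def IsCoadjointEquivariant : Prop :=
  ∀ (v : a × g) (ξ : Module.Dual K a),
    ρ v (u ξ) = - u (ξ ∘ₗ ((θ v.2).toLinearMap + (LieAlgebra.ad K a v.1)))

def act (x : a) : Module.End K a := (θ (π.symm x)).toLinearMap

/-- `ad_v` on `𝔞` for `v = (x, π⁻¹ x) ∈ 𝔞 ⋊ 𝔤`. -/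
def actAd (x : a) : Module.End K a := act θ π x + LieAlgebra.ad K a x

/-- The family `a¹` of the statement. -/
def vertDeriv : a →ₗ[K] Derivation K A A := -(ρ ∘ₗ LinearMap.inr K a g ∘ₗ π.symm.toLinearMap)

/-- The family `b¹` of the statement. -/
def graphDeriv : a →ₗ[K] Derivation K A A := ρ ∘ₗ LinearMap.id.prod π.symm.toLinearMap

variable {θ π ρ u}

theorem IsOneCocycle.lie_symm (hπ : IsOneCocycle θ π) (x y : a) :
    ⁅π.symm x, π.symm y⁆ = π.symm (act θ π x y - act θ π y x + ⁅x, y⁆) := by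
  rw [LinearEquiv.eq_symm_apply, hπ]
  simp [act]

theorem IsSemidirectLieHom.lie_apply (hπ : IsOneCocycle θ π) (hρ : IsSemidirectLieHom θ ρ)
    (x x' y y' : a) :
    ⁅ρ (x, π.symm x'), ρ (y, π.symm y')⁆ =
      ρ (act θ π x' y - act θ π y' x + ⁅x, y⁆,
        π.symm (act θ π x' y' - act θ π y' x' + ⁅x', y'⁆)) := by
  rw [← hρ, hπ.lie_symm]
  rfl

theorem apply_eq_graphDeriv_add_vertDeriv (x y : a) :
    ρ (x, π.symm y) = graphDeriv π ρ x + vertDeriv π ρ (x - y) := by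
  have : ((x, π.symm y) : a × g) = (x, π.symm x) - (0, π.symm (x - y)) := by simp
  rw [this, map_sub, sub_eq_add_neg]
  rfl

theorem vertDeriv_apply_u (hu : IsCoadjointEquivariant θ ρ u) (x : a) (ξ : Module.Dual K a) :
    vertDeriv π ρ x (u ξ) = u (ξ ∘ₗ act θ π x) := by
  simp [vertDeriv, hu (0, π.symm x), act]

theorem graphDeriv_apply_u (hu : IsCoadjointEquivariant θ ρ u) (x : a) (ξ : Module.Dual K a) :
    graphDeriv π ρ x (u ξ) = - u (ξ ∘ₗ actAd θ π x) :=
  hu (x, π.symm x) ξ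

theorem lie_vertDeriv (hπ : IsOneCocycle θ π) (hρ : IsSemidirectLieHom θ ρ) (x y : a) :
    ⁅vertDeriv π ρ x, vertDeriv π ρ y⁆ =
      vertDeriv π ρ (act θ π y x) - vertDeriv π ρ (actAd θ π x y) := by
  have h := hρ.lie_apply hπ 0 x 0 y
  change ⁅-ρ (0, π.symm x), -ρ (0, π.symm y)⁆ = _
  rw [neg_lie, lie_neg, neg_neg, h, apply_eq_graphDeriv_add_vertDeriv]
  simp only [map_zero, lie_zero, sub_zero, add_zero, zero_sub, zero_add, actAd,
    LinearMap.add_apply, LieAlgebra.ad_apply, map_neg, map_add, map_sub]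
  abel

theorem lie_graphDeriv_vertDeriv (hπ : IsOneCocycle θ π) (hρ : IsSemidirectLieHom θ ρ) (x y : a) :
    ⁅graphDeriv π ρ x, vertDeriv π ρ y⁆ =
      graphDeriv π ρ (act θ π y x) + vertDeriv π ρ (actAd θ π x y) := by
  have h := hρ.lie_apply hπ x x 0 y
  change ⁅ρ (x, π.symm x), -ρ (0, π.symm y)⁆ = _
  rw [lie_neg, h, apply_eq_graphDeriv_add_vertDeriv]
  simp only [map_zero, lie_zero, add_zero, zero_sub, actAd, LinearMap.add_apply,
    LieAlgebra.ad_apply, map_neg, map_add, map_sub]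
  abel

theorem lie_graphDeriv (hπ : IsOneCocycle θ π) (hρ : IsSemidirectLieHom θ ρ) (x y : a) :
    ⁅graphDeriv π ρ x, graphDeriv π ρ y⁆ =
      graphDeriv π ρ (actAd θ π x y) - graphDeriv π ρ (act θ π y x) := by
  have h := hρ.lie_apply hπ x x y y
  change ⁅ρ (x, π.symm x), ρ (y, π.symm y)⁆ = _
  rw [h, apply_eq_graphDeriv_add_vertDeriv]
  simp only [actAd, LinearMap.add_apply, LieAlgebra.ad_apply, map_add, map_sub]
  abel

variable {ι : Type*} [Fintype ι]

theorem cybe_one (hπ : IsOneCocycle θ π) (hρ : IsSemidirectLieHom θ ρ)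
    (hu : IsCoadjointEquivariant θ ρ u) (b : Module.Basis ι K a) :
    ∑ i, ∑ k, ⁅vertDeriv π ρ (b i), vertDeriv π ρ (b k)⁆ ⊗ₜ[K]
        (u (b.coord i) ⊗ₜ[K] u (b.coord k))
      = ∑ i, ∑ k, vertDeriv π ρ (b i) ⊗ₜ[K]
          (vertDeriv π ρ (b k) (u (b.coord i)) ⊗ₜ[K] u (b.coord k))
      + ∑ i, ∑ l, vertDeriv π ρ (b i) ⊗ₜ[K]
          (u (b.coord l) ⊗ₜ[K] graphDeriv π ρ (b l) (u (b.coord i))) := by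
  have h₁ : ∑ i, ∑ k, vertDeriv π ρ (b i) ⊗ₜ[K]
        (vertDeriv π ρ (b k) (u (b.coord i)) ⊗ₜ[K] u (b.coord k))
      = ∑ i, ∑ k, vertDeriv π ρ (act θ π (b k) (b i)) ⊗ₜ[K]
        (u (b.coord i) ⊗ₜ[K] u (b.coord k)) := by
    simp_rw [vertDeriv_apply_u hu]
    rw [Finset.sum_comm]
    conv_rhs => rw [Finset.sum_comm]
    refine Finset.sum_congr rfl fun k _ => ?_
    exact b.sum_apply_coord_comp ((TensorProduct.mk K _ _).compl₁₂ (vertDeriv π ρ)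
      ((TensorProduct.mk K A A).flip (u (b.coord k)) ∘ₗ u)) (act θ π (b k))
  have h₂ : ∑ i, ∑ l, vertDeriv π ρ (b i) ⊗ₜ[K]
        (u (b.coord l) ⊗ₜ[K] graphDeriv π ρ (b l) (u (b.coord i)))
      = - ∑ i, ∑ k, vertDeriv π ρ (actAd θ π (b i) (b k)) ⊗ₜ[K]
        (u (b.coord i) ⊗ₜ[K] u (b.coord k)) := by
    simp_rw [graphDeriv_apply_u hu, tmul_neg, Finset.sum_neg_distrib]
    rw [Finset.sum_comm]
    congr 1
    refine Finset.sum_congr rfl fun l _ => ?_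
    exact b.sum_apply_coord_comp ((TensorProduct.mk K _ _).compl₁₂ (vertDeriv π ρ)
      ((TensorProduct.mk K A A (u (b.coord l))) ∘ₗ u)) (actAd θ π (b l))
  simp_rw [h₁, h₂, lie_vertDeriv hπ hρ, sub_tmul, Finset.sum_sub_distrib, sub_eq_add_neg]

theorem cybe_two (hπ : IsOneCocycle θ π) (hρ : IsSemidirectLieHom θ ρ)
    (hu : IsCoadjointEquivariant θ ρ u) (b : Module.Basis ι K a) :
    ∑ j, ∑ k, vertDeriv π ρ (b k) (u (b.coord j)) ⊗ₜ[K]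
        (graphDeriv π ρ (b j) ⊗ₜ[K] u (b.coord k))
      = ∑ j, ∑ k, u (b.coord j) ⊗ₜ[K]
          (⁅graphDeriv π ρ (b j), vertDeriv π ρ (b k)⁆ ⊗ₜ[K] u (b.coord k))
      + ∑ j, ∑ k, u (b.coord j) ⊗ₜ[K]
          (vertDeriv π ρ (b k) ⊗ₜ[K] graphDeriv π ρ (b j) (u (b.coord k))) := by
  have h₁ : ∑ j, ∑ k, vertDeriv π ρ (b k) (u (b.coord j)) ⊗ₜ[K]
        (graphDeriv π ρ (b j) ⊗ₜ[K] u (b.coord k))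
      = ∑ j, ∑ k, u (b.coord j) ⊗ₜ[K]
        (graphDeriv π ρ (act θ π (b k) (b j)) ⊗ₜ[K] u (b.coord k)) := by
    simp_rw [vertDeriv_apply_u hu]
    rw [Finset.sum_comm]
    conv_rhs => rw [Finset.sum_comm]
    refine Finset.sum_congr rfl fun k _ => ?_
    exact b.sum_apply_coord_comp ((TensorProduct.mk K A _).compl₁₂ u
      ((TensorProduct.mk K _ A).flip (u (b.coord k)) ∘ₗ graphDeriv π ρ)).flip (act θ π (b k))
  have h₂ : ∑ j, ∑ k, u (b.coord j) ⊗ₜ[K]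
        (vertDeriv π ρ (b k) ⊗ₜ[K] graphDeriv π ρ (b j) (u (b.coord k)))
      = - ∑ j, ∑ k, u (b.coord j) ⊗ₜ[K]
        (vertDeriv π ρ (actAd θ π (b j) (b k)) ⊗ₜ[K] u (b.coord k)) := by
    simp_rw [graphDeriv_apply_u hu, tmul_neg, Finset.sum_neg_distrib]
    congr 1
    refine Finset.sum_congr rfl fun j _ => ?_
    exact b.sum_apply_coord_comp (((TensorProduct.mk K _ A).compl₁₂ (vertDeriv π ρ) u).compr₂
      (TensorProduct.mk K A _ (u (b.coord j)))) (actAd θ π (b j))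
  simp_rw [h₁, h₂, lie_graphDeriv_vertDeriv hπ hρ, add_tmul, tmul_add, Finset.sum_add_distrib,
    add_neg_cancel_right]

theorem cybe_three (hπ : IsOneCocycle θ π) (hρ : IsSemidirectLieHom θ ρ)
    (hu : IsCoadjointEquivariant θ ρ u) (b : Module.Basis ι K a) :
    ∑ i, ∑ l, vertDeriv π ρ (b i) (u (b.coord l)) ⊗ₜ[K]
        (u (b.coord i) ⊗ₜ[K] graphDeriv π ρ (b l))
      + ∑ j, ∑ l, u (b.coord j) ⊗ₜ[K]
        (graphDeriv π ρ (b j) (u (b.coord l)) ⊗ₜ[K] graphDeriv π ρ (b l))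
      + ∑ j, ∑ l, u (b.coord j) ⊗ₜ[K]
        (u (b.coord l) ⊗ₜ[K] ⁅graphDeriv π ρ (b j), graphDeriv π ρ (b l)⁆)
      = 0 := by
  have h₁ : ∑ i, ∑ l, vertDeriv π ρ (b i) (u (b.coord l)) ⊗ₜ[K]
        (u (b.coord i) ⊗ₜ[K] graphDeriv π ρ (b l))
      = ∑ j, ∑ l, u (b.coord j) ⊗ₜ[K]
        (u (b.coord l) ⊗ₜ[K] graphDeriv π ρ (act θ π (b l) (b j))) := by
    simp_rw [vertDeriv_apply_u hu]
    conv_rhs => rw [Finset.sum_comm]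
    refine Finset.sum_congr rfl fun i _ => ?_
    exact b.sum_apply_coord_comp ((TensorProduct.mk K A _).compl₁₂ u
      (TensorProduct.mk K A _ (u (b.coord i)) ∘ₗ graphDeriv π ρ)).flip (act θ π (b i))
  have h₂ : ∑ j, ∑ l, u (b.coord j) ⊗ₜ[K]
        (graphDeriv π ρ (b j) (u (b.coord l)) ⊗ₜ[K] graphDeriv π ρ (b l))
      = - ∑ j, ∑ l, u (b.coord j) ⊗ₜ[K]
        (u (b.coord l) ⊗ₜ[K] graphDeriv π ρ (actAd θ π (b j) (b l))) := by
    simp_rw [graphDeriv_apply_u hu, neg_tmul, tmul_neg, Finset.sum_neg_distrib]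
    congr 1
    refine Finset.sum_congr rfl fun j _ => ?_
    exact b.sum_apply_coord_comp
      (((TensorProduct.mk K A _).compl₁₂ u (graphDeriv π ρ)).flip.compr₂
        (TensorProduct.mk K A _ (u (b.coord j)))) (actAd θ π (b j))
  simp_rw [h₁, h₂, lie_graphDeriv hπ hρ, tmul_sub, Finset.sum_sub_distrib]
  abel

end CocycleTuple

theorem cbcst_gives_cybe_general
    {g a : Type*} [LieRing g] [LieAlgebra ℂ g] [LieRing a] [LieAlgebra ℂ a]
    {A : Type*} [CommRing A] [Algebra ℂ A]
    (θ : g →ₗ⁅ℂ⁆ LieDerivation ℂ a a)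
    (π : g ≃ₗ[ℂ] a)
    (hπ : ∀ x y : g, π ⁅x, y⁆ = θ x (π y) - θ y (π x) + ⁅π x, π y⁆)
    (ρ : (a × g) →ₗ[ℂ] Derivation ℂ A A)
    (hρ : ∀ p q : a × g,
      ρ (θ p.2 q.1 - θ q.2 p.1 + ⁅p.1, q.1⁆, ⁅p.2, q.2⁆) = ⁅ρ p, ρ q⁆)
    (u : Module.Dual ℂ a →ₗ[ℂ] A)
    (hu : ∀ (v : a × g) (ξ : Module.Dual ℂ a),
      ρ v (u ξ) = - u (ξ ∘ₗ ((θ v.2).toLinearMap + (LieAlgebra.ad ℂ a v.1))))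
    (d : ℕ) (bas : Module.Basis (Fin d) ℂ a)
    (a1 : Fin d → Derivation ℂ A A) (ha1 : ∀ m, a1 m = - ρ (0, π.symm (bas m)))
    (a0 : Fin d → A) (ha0 : ∀ m, a0 m = u (bas.coord m))
    (b0 : Fin d → A) (hb0 : ∀ m, b0 m = u (bas.coord m))
    (b1 : Fin d → Derivation ℂ A A)
    (hb1 : ∀ m, b1 m = ρ (bas m, π.symm (bas m))) :
    (∑ i, ∑ k, (⁅a1 i, a1 k⁆ ⊗ₜ[ℂ] (a0 i ⊗ₜ[ℂ] a0 k))
        = ∑ i, ∑ k, (a1 i ⊗ₜ[ℂ] ((a1 k) (a0 i) ⊗ₜ[ℂ] a0 k))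
        + ∑ i, ∑ l, (a1 i ⊗ₜ[ℂ] (b0 l ⊗ₜ[ℂ] (b1 l) (a0 i)))) ∧
    (∑ j, ∑ k, ((a1 k) (b0 j) ⊗ₜ[ℂ] (b1 j ⊗ₜ[ℂ] a0 k))
        = ∑ j, ∑ k, (b0 j ⊗ₜ[ℂ] (⁅b1 j, a1 k⁆ ⊗ₜ[ℂ] a0 k))
        + ∑ j, ∑ k, (b0 j ⊗ₜ[ℂ] (a1 k ⊗ₜ[ℂ] (b1 j) (a0 k)))) ∧
    (∑ i, ∑ l, ((a1 i) (b0 l) ⊗ₜ[ℂ] (a0 i ⊗ₜ[ℂ] b1 l))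
        + ∑ j, ∑ l, (b0 j ⊗ₜ[ℂ] ((b1 j) (b0 l) ⊗ₜ[ℂ] b1 l))
        + ∑ j, ∑ l, (b0 j ⊗ₜ[ℂ] (b0 l ⊗ₜ[ℂ] ⁅b1 j, b1 l⁆)) = 0) := by
  obtain rfl : a1 = fun m => CocycleTuple.vertDeriv π ρ (bas m) := funext ha1
  obtain rfl : b1 = fun m => CocycleTuple.graphDeriv π ρ (bas m) := funext hb1
  obtain rfl : a0 = fun m => u (bas.coord m) := funext ha0
  obtain rfl : b0 = fun m => u (bas.coord m) := funext hb0
  exact ⟨CocycleTuple.cybe_one hπ hρ hu bas, CocycleTuple.cybe_two hπ hρ hu bas,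
    CocycleTuple.cybe_three hπ hρ hu bas⟩

/-- From a classical bijective cocycle 7-tuple `(𝔤, 𝔞, θ, π, ρ, u)` one obtains a
geometric solution of the classical Yang–Baxter equation: the families
`a¹ₘ = −ρ(0, π⁻¹(vₘ))`, `a⁰ₘ = b⁰ₘ = u(vᵐ)`, `b¹ₘ = ρ(vₘ, π⁻¹(vₘ))` satisfy the three
component classical Yang–Baxter equations (E1)–(E3). -/
theorem cbcst_gives_cybe
    {g a : Type*} [LieRing g] [LieAlgebra ℂ g] [LieRing a] [LieAlgebra ℂ a]
    [FiniteDimensional ℂ g] [FiniteDimensional ℂ a]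
    {A : Type*} [CommRing A] [Algebra ℂ A]
    (θ : g →ₗ⁅ℂ⁆ LieDerivation ℂ a a)
    (π : g ≃ₗ[ℂ] a)
    (hπ : ∀ x y : g, π ⁅x, y⁆ = θ x (π y) - θ y (π x) + ⁅π x, π y⁆)
    (ρ : (a × g) →ₗ[ℂ] Derivation ℂ A A)
    (hρ : ∀ p q : a × g,
      ρ (θ p.2 q.1 - θ q.2 p.1 + ⁅p.1, q.1⁆, ⁅p.2, q.2⁆) = ⁅ρ p, ρ q⁆)
    (u : Module.Dual ℂ a →ₗ[ℂ] A)
    (hu : ∀ (v : a × g) (ξ : Module.Dual ℂ a),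
      ρ v (u ξ) = - u (ξ ∘ₗ ((θ v.2).toLinearMap + (LieAlgebra.ad ℂ a v.1))))
    (d : ℕ) (bas : Module.Basis (Fin d) ℂ a)
    (a1 : Fin d → Derivation ℂ A A) (ha1 : ∀ m, a1 m = - ρ (0, π.symm (bas m)))
    (a0 : Fin d → A) (ha0 : ∀ m, a0 m = u (bas.coord m))
    (b0 : Fin d → A) (hb0 : ∀ m, b0 m = u (bas.coord m))
    (b1 : Fin d → Derivation ℂ A A)
    (hb1 : ∀ m, b1 m = ρ (bas m, π.symm (bas m))) :
    (∑ i, ∑ k, (⁅a1 i, a1 k⁆ ⊗ₜ[ℂ] (a0 i ⊗ₜ[ℂ] a0 k))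
        = ∑ i, ∑ k, (a1 i ⊗ₜ[ℂ] ((a1 k) (a0 i) ⊗ₜ[ℂ] a0 k))
        + ∑ i, ∑ l, (a1 i ⊗ₜ[ℂ] (b0 l ⊗ₜ[ℂ] (b1 l) (a0 i)))) ∧
    (∑ j, ∑ k, ((a1 k) (b0 j) ⊗ₜ[ℂ] (b1 j ⊗ₜ[ℂ] a0 k))
        = ∑ j, ∑ k, (b0 j ⊗ₜ[ℂ] (⁅b1 j, a1 k⁆ ⊗ₜ[ℂ] a0 k))
        + ∑ j, ∑ k, (b0 j ⊗ₜ[ℂ] (a1 k ⊗ₜ[ℂ] (b1 j) (a0 k)))) ∧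
    (∑ i, ∑ l, ((a1 i) (b0 l) ⊗ₜ[ℂ] (a0 i ⊗ₜ[ℂ] b1 l))
        + ∑ j, ∑ l, (b0 j ⊗ₜ[ℂ] ((b1 j) (b0 l) ⊗ₜ[ℂ] b1 l))
        + ∑ j, ∑ l, (b0 j ⊗ₜ[ℂ] (b0 l ⊗ₜ[ℂ] ⁅b1 j, b1 l⁆)) = 0) :=
  cbcst_gives_cybe_general θ π hπ ρ hρ u hu d bas a1 ha1 a0 ha0 b0 hb0 b1 hb1
end

section
/- Let 𝔥 be the Heisenberg Lie algebra over ℂ with basis X, Y, C and brackets [X,Y] = C, [X,C] = [Y,C] = 0, and let 𝔱 be the Lie algebra of upper triangular 2×2 complex matrices. Define the ℂ-linear map ρ: 𝔱 → End(𝔥) by: for g = [[p,q],[0,r]], ρ(g)(X) = pX, ρ(g)(Y) = qX + rY, ρ(g)(C) = (p+r)C; and define π: 𝔱 → 𝔥 by π([[p,q],[0,r]]) = qX + rY + (p + q/2 + r)C. Then: (i) for every g ∈ 𝔱, ρ(g) is a derivation of 𝔥, and ρ: 𝔱 → Der(𝔥) is a Lie algebra homomorphism; (ii) π is a ℂ-linear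 bijection; (iii) π([g,h]) = ρ(g)(π(h)) − ρ(h)(π(g)) + [π(g),π(h)] for all g,h ∈ 𝔱, i.e., π is a bijective 1-cocycle. -/
attribute [local instance 100] LieRing.ofAssociativeRing

/-- The Lie subalgebra of upper triangular `2×2` complex matrices. -/
def upperTriangular2 : LieSubalgebra ℂ (Matrix (Fin 2) (Fin 2) ℂ) where
  carrier := {M | M 1 0 = 0}
  add_mem' := by
    intro a b ha hb
    simp only [Set.mem_setOf_eq, Matrix.add_apply] at *
    simp [ha, hb]
  zero_mem' := by simp
  smul_mem' := by
    intro c a ha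
    simp only [Set.mem_setOf_eq, Matrix.smul_apply] at *
    simp [ha]
  lie_mem' := by
    intro a b ha hb
    simp only [Set.mem_setOf_eq] at *
    simp [Ring.lie_def, Matrix.sub_apply, Matrix.mul_apply, Fin.sum_univ_two, ha, hb]

/-!
A linear endomorphism of a Lie algebra that obeys the Leibniz rule on pairs of basis vectors is a
derivation, so (i) is a finite check on `X, Y, C`. In that basis `ρ(g)` is the triangular matrix
with diagonal `(p, r, p + r)` and off-diagonal entry `q`, and brackets of such endomorphisms are
again of this shape, with only the off-diagonal entry `pq' + qr' - p'q - q'r` surviving; this is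
also the only nonzero entry of `⁅g, h⁆` in `𝔱`, which gives the homomorphism property. In the
coordinates `(p, q, r)` of `𝔱` and `(X, Y, C)` of `𝔥`, `π` is the invertible shear
`(p, q, r) ↦ (q, r, p + q/2 + r)`, and the cocycle identity is a direct computation.
-/

theorem Module.Basis.leibniz_of_forall {R L ι : Type*} [CommRing R] [LieRing L] [LieAlgebra R L]
    (b : Module.Basis ι R L) (D : Module.End R L)
    (h : ∀ i j, D ⁅b i, b j⁆ = ⁅D (b i), b j⁆ + ⁅b i, D (b j)⁆) (u v : L) :
    D ⁅u, v⁆ = ⁅D u, v⁆ + ⁅u, D v⁆ := by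
  let ad : L →ₗ[R] L →ₗ[R] L := (LieModule.toEnd R L L : L →ₗ[R] Module.End R L)
  have hD : ad.compr₂ D = ad ∘ₗ D + ad.compl₂ D :=
    LinearMap.ext_basis b b fun i j => by simpa [ad] using h i j
  simpa [ad] using LinearMap.congr_fun₂ hD u v

namespace Module.Basis

section Triangular

variable {R M : Type*} [CommRing R] [AddCommGroup M] [Module R M] (e : Basis (Fin 3) R M)

/-- `ρ(g)` for `g = [[p, q], [0, r]]`. -/
noncomputable def triangularEnd (p q r : R) : Module.End R M :=
  e.constr R ![p • e 0, q • e 0 + r • e 1, (p + r) • e 2]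

variable {e} {p q r : R}

@[simp] theorem triangularEnd_zero : e.triangularEnd p q r (e 0) = p • e 0 := by
  simp [triangularEnd]

@[simp] theorem triangularEnd_one : e.triangularEnd p q r (e 1) = q • e 0 + r • e 1 := by
  simp [triangularEnd]

@[simp] theorem triangularEnd_two : e.triangularEnd p q r (e 2) = (p + r) • e 2 := by
  simp [triangularEnd]

theorem eq_triangularEnd {D : Module.End R M} (h₀ : D (e 0) = p • e 0)
    (h₁ : D (e 1) = q • e 0 + r • e 1) (h₂ : D (e 2) = (p + r) • e 2) :
    D = e.triangularEnd p q r :=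
  e.ext fun i => by fin_cases i <;> simp [h₀, h₁, h₂]

theorem lie_triangularEnd (p' q' r' : R) :
    ⁅e.triangularEnd p q r, e.triangularEnd p' q' r'⁆ =
      e.triangularEnd 0 (p * q' + q * r' - (p' * q + q' * r)) 0 := by
  refine e.ext fun i => ?_
  fin_cases i <;>
    simp only [Fin.zero_eta, Fin.mk_one, Fin.reduceFinMk, Ring.lie_def, LinearMap.sub_apply,
      End.mul_apply, triangularEnd_zero, triangularEnd_one, triangularEnd_two, map_add, map_smul,
      smul_add, smul_smul, zero_smul, add_zero] <;>
    module

end Triangular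

section Heisenberg

variable {R H : Type*} [CommRing R] [LieRing H] [LieAlgebra R H] {e : Basis (Fin 3) R H}

variable (e) in
structure IsHeisenberg : Prop where
  lie_zero_one : ⁅e 0, e 1⁆ = e 2
  lie_zero_two : ⁅e 0, e 2⁆ = 0
  lie_one_two : ⁅e 1, e 2⁆ = 0

namespace IsHeisenberg

theorem lie_one_zero (he : e.IsHeisenberg) : ⁅e 1, e 0⁆ = -e 2 := by
  rw [← lie_skew, he.lie_zero_one]

theorem lie_two_zero (he : e.IsHeisenberg) : ⁅e 2, e 0⁆ = 0 := by
  rw [← lie_skew, he.lie_zero_two, neg_zero]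

theorem lie_two_one (he : e.IsHeisenberg) : ⁅e 2, e 1⁆ = 0 := by
  rw [← lie_skew, he.lie_one_two, neg_zero]

theorem triangularEnd_lie (he : e.IsHeisenberg) (p q r : R) (u v : H) :
    e.triangularEnd p q r ⁅u, v⁆ =
      ⁅e.triangularEnd p q r u, v⁆ + ⁅u, e.triangularEnd p q r v⁆ := by
  refine e.leibniz_of_forall _ (fun i j => ?_) u v
  fin_cases i <;> fin_cases j <;>
    simp only [Fin.zero_eta, Fin.mk_one, Fin.reduceFinMk, he.lie_zero_one, he.lie_zero_two,
      he.lie_one_two, he.lie_one_zero, he.lie_two_zero, he.lie_two_one, lie_self, map_neg, map_zero,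
      triangularEnd_zero, triangularEnd_one, triangularEnd_two, add_lie, lie_add, smul_lie,
      lie_smul, smul_zero, smul_neg, add_zero, zero_add] <;>
    module

end IsHeisenberg

end Heisenberg

section Cocycle

variable {K H : Type*} [Field K] [CharZero K] [LieRing H] [LieAlgebra K H] {e : Basis (Fin 3) K H}

variable (e) in
/-- `π(g)` for `g = [[p, q], [0, r]]`. -/
noncomputable def cocycleVec (p q r : K) : H := q • e 0 + r • e 1 + (p + q / 2 + r) • e 2

theorem IsHeisenberg.cocycleVec_lie (he : e.IsHeisenberg) (p q r p' q' r' : K) :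
    e.cocycleVec 0 (p * q' + q * r' - (p' * q + q' * r)) 0 =
      e.triangularEnd p q r (e.cocycleVec p' q' r') - e.triangularEnd p' q' r' (e.cocycleVec p q r)
        + ⁅e.cocycleVec p q r, e.cocycleVec p' q' r'⁆ := by
  simp only [cocycleVec, zero_smul, add_zero, zero_add, map_add, map_smul, triangularEnd_zero,
    triangularEnd_one, triangularEnd_two, smul_add, smul_smul, lie_add, add_lie, lie_smul,
    smul_lie, lie_self, smul_zero, smul_neg, he.lie_zero_one, he.lie_zero_two, he.lie_one_two,
    he.lie_one_zero, he.lie_two_zero, he.lie_two_one]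
  module

theorem cocycleVec_bijective :
    Function.Bijective fun x : K × K × K => e.cocycleVec x.1 x.2.1 x.2.2 := by
  refine ⟨fun ⟨p, q, r⟩ ⟨p', q', r'⟩ hx => ?_, fun u =>
    ⟨(e.repr u 2 - e.repr u 0 / 2 - e.repr u 1, e.repr u 0, e.repr u 1), ?_⟩⟩
  · have h (i : Fin 3) := congrArg (e.repr · i) hx
    have hq : q = q' := by simpa [cocycleVec] using h 0
    have hr : r = r' := by simpa [cocycleVec] using h 1
    have hp : p = p' := by simpa [cocycleVec, hq, hr] using h 2
    rw [hp, hq, hr]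
  · conv_rhs => rw [← e.sum_repr u, Fin.sum_univ_three]
    simp only [cocycleVec]
    module

end Cocycle

end Module.Basis

namespace upperTriangular2

variable (g h : upperTriangular2)

theorem apply_one_zero : (g : Matrix (Fin 2) (Fin 2) ℂ) 1 0 = 0 := g.2

theorem lie_apply_zero_zero :
    ((⁅g, h⁆ : upperTriangular2) : Matrix (Fin 2) (Fin 2) ℂ) 0 0 = 0 := by
  simp only [LieSubalgebra.coe_bracket, Ring.lie_def, Matrix.sub_apply, Matrix.mul_apply,
    Fin.sum_univ_two, apply_one_zero]
  ring

theorem lie_apply_one_one :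
    ((⁅g, h⁆ : upperTriangular2) : Matrix (Fin 2) (Fin 2) ℂ) 1 1 = 0 := by
  simp only [LieSubalgebra.coe_bracket, Ring.lie_def, Matrix.sub_apply, Matrix.mul_apply,
    Fin.sum_univ_two, apply_one_zero]
  ring

theorem lie_apply_zero_one :
    ((⁅g, h⁆ : upperTriangular2) : Matrix (Fin 2) (Fin 2) ℂ) 0 1 =
      (g : Matrix (Fin 2) (Fin 2) ℂ) 0 0 * (h : Matrix (Fin 2) (Fin 2) ℂ) 0 1
        + (g : Matrix (Fin 2) (Fin 2) ℂ) 0 1 * (h : Matrix (Fin 2) (Fin 2) ℂ) 1 1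
        - ((h : Matrix (Fin 2) (Fin 2) ℂ) 0 0 * (g : Matrix (Fin 2) (Fin 2) ℂ) 0 1
          + (h : Matrix (Fin 2) (Fin 2) ℂ) 0 1 * (g : Matrix (Fin 2) (Fin 2) ℂ) 1 1) := by
  simp only [LieSubalgebra.coe_bracket, Ring.lie_def, Matrix.sub_apply, Matrix.mul_apply,
    Fin.sum_univ_two]

def entries : ℂ × ℂ × ℂ :=
  ((g : Matrix (Fin 2) (Fin 2) ℂ) 0 0, (g : Matrix (Fin 2) (Fin 2) ℂ) 0 1,
    (g : Matrix (Fin 2) (Fin 2) ℂ) 1 1)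

theorem entries_bijective : Function.Bijective entries := by
  refine ⟨fun g h hgh => ?_, fun x => ⟨⟨!![x.1, x.2.1; 0, x.2.2], rfl⟩, rfl⟩⟩
  simp only [entries, Prod.mk.injEq] at hgh
  ext i j
  fin_cases i <;> fin_cases j <;> simp [hgh, apply_one_zero]

end upperTriangular2

/-- The example of §5 of Etingof–Graña: the Heisenberg Lie algebra `𝔥` with basis
`X = e 0`, `Y = e 1`, `C = e 2` (`[X,Y] = C`, `C` central), the Lie algebra `𝔱` of
upper triangular `2×2` matrices, the action `ρ(g)X = pX`, `ρ(g)Y = qX + rY`,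
`ρ(g)C = (p+r)C`, and the map `π(g) = qX + rY + (p + q/2 + r)C` for
`g = [[p,q],[0,r]]`.  Then each `ρ(g)` is a derivation of `𝔥`, `ρ` is a Lie algebra
homomorphism, `π` is bijective, and `π` is a 1-cocycle. -/
theorem heisenberg_bijective_cocycle
    {H : Type*} [LieRing H] [LieAlgebra ℂ H]
    (e : Module.Basis (Fin 3) ℂ H)
    (hXY : ⁅e 0, e 1⁆ = e 2) (hXC : ⁅e 0, e 2⁆ = 0) (hYC : ⁅e 1, e 2⁆ = 0)
    (ρ : upperTriangular2 →ₗ[ℂ] Module.End ℂ H)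
    (hρX : ∀ g : upperTriangular2,
      ρ g (e 0) = ((g : Matrix (Fin 2) (Fin 2) ℂ) 0 0) • e 0)
    (hρY : ∀ g : upperTriangular2,
      ρ g (e 1) = ((g : Matrix (Fin 2) (Fin 2) ℂ) 0 1) • e 0
        + ((g : Matrix (Fin 2) (Fin 2) ℂ) 1 1) • e 1)
    (hρC : ∀ g : upperTriangular2,
      ρ g (e 2) = ((g : Matrix (Fin 2) (Fin 2) ℂ) 0 0
        + (g : Matrix (Fin 2) (Fin 2) ℂ) 1 1) • e 2)
    (π : upperTriangular2 →ₗ[ℂ] H)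
    (hπdef : ∀ g : upperTriangular2,
      π g = ((g : Matrix (Fin 2) (Fin 2) ℂ) 0 1) • e 0
        + ((g : Matrix (Fin 2) (Fin 2) ℂ) 1 1) • e 1
        + ((g : Matrix (Fin 2) (Fin 2) ℂ) 0 0
            + (g : Matrix (Fin 2) (Fin 2) ℂ) 0 1 / 2
            + (g : Matrix (Fin 2) (Fin 2) ℂ) 1 1) • e 2) :
    (∀ (g : upperTriangular2) (u v : H),
        ρ g ⁅u, v⁆ = ⁅ρ g u, v⁆ + ⁅u, ρ g v⁆) ∧
    (∀ g h : upperTriangular2, ρ ⁅g, h⁆ = ⁅ρ g, ρ h⁆) ∧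
    Function.Bijective π ∧
    (∀ g h : upperTriangular2,
        π ⁅g, h⁆ = ρ g (π h) - ρ h (π g) + ⁅π g, π h⁆) := by
  have he : e.IsHeisenberg := ⟨hXY, hXC, hYC⟩
  have hρ (g : upperTriangular2) : ρ g = e.triangularEnd _ _ _ :=
    Module.Basis.eq_triangularEnd (hρX g) (hρY g) (hρC g)
  have hπ : ⇑π = (fun x : ℂ × ℂ × ℂ => e.cocycleVec x.1 x.2.1 x.2.2) ∘ upperTriangular2.entries :=
    funext hπdef
  refine ⟨fun g u v => ?_, fun g h => ?_, ?_, fun g h => ?_⟩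
  · rw [hρ]
    exact he.triangularEnd_lie _ _ _ u v
  · simp only [hρ, Module.Basis.lie_triangularEnd, upperTriangular2.lie_apply_zero_zero,
      upperTriangular2.lie_apply_zero_one, upperTriangular2.lie_apply_one_one]
  · exact hπ ▸ Module.Basis.cocycleVec_bijective.comp upperTriangular2.entries_bijective
  · simp only [hπ, hρ, Function.comp_apply, upperTriangular2.entries,
      upperTriangular2.lie_apply_zero_zero, upperTriangular2.lie_apply_zero_one,
      upperTriangular2.lie_apply_one_one]
    exact he.cocycleVec_lie _ _ _ _ _ _
end
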